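/- arXiv:2004.05106 — 5 statements merged into one kernel-verified Lean document; each statement's English description precedes it below -/
import Mathlib

section
/- Resource Safety: Let P be a call-free Move bytecode program and let π = (pc₀,σ₀),…,(pcₙ,σₙ) be a well-formed execution sequence of P (i.e., every σᵢ is a well-formed state). Then resources(σₙ) = (resources(σ₀) ∪ RI(π)) \ RE(π), where RI(π) is the set of resources introduced by Pack steps of π and RE(π) is the set of resources eliminated by Unpack steps of π. -/
namespace MoveSem

/-- Tags: either the non-resource tag `U` or a resource tag drawn from `RTag`. -/
inductive MTag (RTag : Type) : Type where
  | U : MTag RTag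
  | res : RTag → MTag RTag

/-- Values: primitive values, or record values.  A record value is a non-empty finite
partial function from field names to tagged values, represented as an association
list (non-emptiness and distinctness of field names are imposed in the
well-formedness predicates below). -/
inductive Val (Prim Fld RTag : Type) : Type where
  | prim : Prim → Val Prim Fld RTag
  | record : List (Fld × (Val Prim Fld RTag × MTag RTag)) → Val Prim Fld RTag

/-- Tagged values: a value paired with a tag. -/
abbrev TVal (Prim Fld RTag : Type) : Type := Val Prim Fld RTag × MTag RTag

variable {Loc Prim Var Fld RTag Ty : Type}

/-- Lookup in an association list (the partial-function reading of a record). -/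
def lookupF {α : Type} [DecidableEq Fld] : List (Fld × α) → Fld → Option α
  | [], _ => none
  | (g, a) :: rest, f => if g = f then some a else lookupF rest f

/-- The subterm `tv[p]` of a tagged value located at path `p`. -/
def subTV [DecidableEq Fld] : TVal Prim Fld RTag → List Fld → Option (TVal Prim Fld RTag)
  | tv, [] => some tv
  | (Val.record flds, _), f :: p =>
    match lookupF flds f with
    | some tv' => subTV tv' p
    | none => none
  | (Val.prim _, _), _ :: _ => none

/-- The replacement `tv[p := tv']` of the subterm at path `p` by `tv'`. -/
def setSubTV [DecidableEq Fld] : TVal Prim Fld RTag → List Fld → TVal Prim Fld RTag →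
    Option (TVal Prim Fld RTag)
  | _, [], tv' => some tv'
  | (Val.record flds, t), f :: p, tv' =>
    match lookupF flds f with
    | some tvf =>
      match setSubTV tvf p tv' with
      | some tvf' =>
        some (Val.record (flds.map fun ft => if ft.1 = f then (ft.1, tvf') else ft), t)
      | none => none
    | none => none
  | (Val.prim _, _), _ :: _, _ => none

/-- A tagged value is a *resource* when the type of its value is a resource type. -/
def IsRes (typeOf : Val Prim Fld RTag → Ty) (ResTy : Set Ty) (tv : TVal Prim Fld RTag) : Prop :=
  typeOf tv.1 ∈ ResTy

/-- Well-formed tagged values: the tag is a resource tag iff the type is a resource type,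
and either the value is primitive, or it is a (non-empty, duplicate-free) record value all
of whose field values are well-formed and, in case the type is not a resource type, none of
whose field values is a resource. -/
inductive WFTV (typeOf : Val Prim Fld RTag → Ty) (ResTy : Set Ty) :
    TVal Prim Fld RTag → Prop where
  | prim (p : Prim) (t : MTag RTag)
      (hiff : typeOf (Val.prim p) ∈ ResTy ↔ t ≠ MTag.U) :
      WFTV typeOf ResTy (Val.prim p, t)
  | record (flds : List (Fld × TVal Prim Fld RTag)) (t : MTag RTag)
      (hne : flds ≠ [])
      (hnodup : (flds.map Prod.fst).Nodup)
      (hwf : ∀ f tv, (f, tv) ∈ flds → WFTV typeOf ResTy tv)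
      (hiff : typeOf (Val.record flds) ∈ ResTy ↔ t ≠ MTag.U)
      (hnores : typeOf (Val.record flds) ∉ ResTy →
        ∀ f tv, (f, tv) ∈ flds → ¬ IsRes typeOf ResTy tv) :
      WFTV typeOf ResTy (Val.record flds, t)

/-- References: a location, a path, and a mutability qualifier (`true` = mut). -/
structure MRef (Loc Fld : Type) : Type where
  loc : Loc
  path : List Fld
  mutq : Bool

/-- Stack values: tagged values, references, or (for `Branch`) locations. -/
abbrev SVal (Loc Prim Fld RTag : Type) : Type :=
  TVal Prim Fld RTag ⊕ (MRef Loc Fld ⊕ Loc)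

def SV.tv (tv : TVal Prim Fld RTag) : SVal Loc Prim Fld RTag := Sum.inl tv
def SV.ref (r : MRef Loc Fld) : SVal Loc Prim Fld RTag := Sum.inr (Sum.inl r)
def SV.loc (c : Loc) : SVal Loc Prim Fld RTag := Sum.inr (Sum.inr c)

/-- States: a memory, a global store, a local map, and an operand stack. -/
structure MState (Loc Prim Var Fld RTag Ty : Type) : Type where
  M : Loc → Option (TVal Prim Fld RTag)
  G : Prim × Ty → Option Loc
  L : Var → Option (Loc ⊕ MRef Loc Fld)
  S : List (SVal Loc Prim Fld RTag)

/-- Update (or delete, with `b = none`) a binding of a partial map. -/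
def upd {α β : Type} [DecidableEq α] (f : α → Option β) (a : α) (b : Option β) :
    α → Option β :=
  fun x => if x = a then b else f x

/-- Globally consistent states. -/
structure GloballyConsistent (typeOf : Val Prim Fld RTag → Ty) (ResTy : Set Ty)
    (σ : MState Loc Prim Var Fld RTag Ty) : Prop where
  wf_mem : ∀ c tv, σ.M c = some tv → WFTV typeOf ResTy tv
  wf_stack : ∀ tv, SV.tv tv ∈ σ.S → WFTV typeOf ResTy tv
  dom_eq : ∀ c, (∃ tv, σ.M c = some tv) ↔
    ((∃ g, σ.G g = some c) ∨ (∃ x, σ.L x = some (Sum.inl c)))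
  glob_ty : ∀ a s c, σ.G (a, s) = some c → ∃ v t, σ.M c = some (v, t) ∧ typeOf v = s

/-- Tag-consistent states: each resource tag occurs at most once among subterms of
memory values and stack entries. -/
structure TagConsistent [DecidableEq Fld] (σ : MState Loc Prim Var Fld RTag Ty) : Prop where
  mem_mem : ∀ c₁ c₂ tv₁ tv₂ p₁ p₂ v₁ v₂ t, σ.M c₁ = some tv₁ → σ.M c₂ = some tv₂ →
    subTV tv₁ p₁ = some (v₁, MTag.res t) → subTV tv₂ p₂ = some (v₂, MTag.res t) →
    c₁ = c₂ ∧ p₁ = p₂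
  stack_stack : ∀ (i₁ i₂ : ℕ) tv₁ tv₂ p₁ p₂ v₁ v₂ t,
    σ.S[i₁]? = some (SV.tv tv₁) → σ.S[i₂]? = some (SV.tv tv₂) →
    subTV tv₁ p₁ = some (v₁, MTag.res t) → subTV tv₂ p₂ = some (v₂, MTag.res t) →
    i₁ = i₂ ∧ p₁ = p₂
  mem_stack : ∀ c tv (i : ℕ) tv' p₁ p₂ v₁ v₂ t, σ.M c = some tv → σ.S[i]? = some (SV.tv tv') →
    subTV tv p₁ = some (v₁, MTag.res t) → subTV tv' p₂ = some (v₂, MTag.res t) → False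

/-- Non-aliasing states. -/
structure NonAliasing (σ : MState Loc Prim Var Fld RTag Ty) : Prop where
  locals : ∀ x₁ x₂ c, x₁ ≠ x₂ → σ.L x₁ = some (Sum.inl c) → σ.L x₂ = some (Sum.inl c) → False
  globals : ∀ g₁ g₂ c, g₁ ≠ g₂ → σ.G g₁ = some c → σ.G g₂ = some c → False
  glob_loc : ∀ g x c, σ.G g = some c → σ.L x = some (Sum.inl c) → False

/-- Well-formed states. -/
structure WFState [DecidableEq Fld] (typeOf : Val Prim Fld RTag → Ty) (ResTy : Set Ty)
    (σ : MState Loc Prim Var Fld RTag Ty) : Prop where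
  gc : GloballyConsistent typeOf ResTy σ
  tc : TagConsistent σ
  na : NonAliasing σ

/-- The resource tags of a state: tags occurring on some subterm of a value in the
image of the memory or of a tagged value on the stack. -/
def resources [DecidableEq Fld] (σ : MState Loc Prim Var Fld RTag Ty) : Set RTag :=
  { t | (∃ c tv p v, σ.M c = some tv ∧ subTV tv p = some (v, MTag.res t)) ∨
        (∃ tv, SV.tv tv ∈ σ.S ∧ ∃ p v, subTV tv p = some (v, MTag.res t)) }

/-- Bytecode operations of the (call-free) Move bytecode language. -/
inductive Op (Prim Var Fld Ty : Type) : Type where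
  | MvLoc (x : Var)
  | CpLoc (x : Var)
  | StLoc (x : Var)
  | BorrowLoc (x : Var)
  | BorrowField (f : Fld)
  | FreezeRef
  | ReadRef
  | WriteRef
  | Pop
  | Pack (s : Ty)
  | Unpack (s : Ty)
  | LoadConst (a : Prim)
  | StackOp (n : ℕ) (op : List Prim → Prim) (legal : List Prim → Prop)
  | MoveTo (s : Ty)
  | MoveFrom (s : Ty)
  | BorrowGlobal (s : Ty)
  | ExistsG (s : Ty)
  | Branch (l : ℕ)

/-- The side condition of `StLoc x`: the local `x` is unset, holds a reference,
or holds a location storing a non-resource (`U`-tagged) value. -/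
def stlocOK (M : Loc → Option (TVal Prim Fld RTag))
    (L : Var → Option (Loc ⊕ MRef Loc Fld)) (x : Var) : Prop :=
  L x = none ∨ (∃ r, L x = some (Sum.inr r)) ∨
    (∃ c v, L x = some (Sum.inl c) ∧ M c = some (v, MTag.U))

/-- The small-step operational semantics of the Move bytecode interpreter. -/
inductive Step [DecidableEq Loc] [DecidableEq Prim] [DecidableEq Var] [DecidableEq Fld]
    [DecidableEq Ty] (typeOf : Val Prim Fld RTag → Ty) (ResTy : Set Ty)
    (Addr : Set Prim) (boolP : Bool → Prim) :
    Op Prim Var Fld Ty → MState Loc Prim Var Fld RTag Ty →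
      MState Loc Prim Var Fld RTag Ty → Prop where
  | mvloc_loc {M G L S x c tv} (h1 : L x = some (Sum.inl c)) (h2 : M c = some tv) :
      Step typeOf ResTy Addr boolP (Op.MvLoc x) ⟨M, G, L, S⟩
        ⟨upd M c none, G, upd L x none, SV.tv tv :: S⟩
  | mvloc_ref {M G L S x r} (h1 : L x = some (Sum.inr r)) :
      Step typeOf ResTy Addr boolP (Op.MvLoc x) ⟨M, G, L, S⟩
        ⟨M, G, upd L x none, SV.ref r :: S⟩
  | cploc_loc {M G L S x c v} (h1 : L x = some (Sum.inl c))
      (h2 : M c = some (v, MTag.U)) :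
      Step typeOf ResTy Addr boolP (Op.CpLoc x) ⟨M, G, L, S⟩
        ⟨M, G, L, SV.tv (v, MTag.U) :: S⟩
  | cploc_ref {M G L S x r} (h1 : L x = some (Sum.inr r)) :
      Step typeOf ResTy Addr boolP (Op.CpLoc x) ⟨M, G, L, S⟩
        ⟨M, G, L, SV.ref r :: S⟩
  | stloc_tv {M G L S x tv c'} (h1 : stlocOK M L x) (h2 : M c' = none) :
      Step typeOf ResTy Addr boolP (Op.StLoc x) ⟨M, G, L, SV.tv tv :: S⟩
        ⟨upd M c' (some tv), G, upd L x (some (Sum.inl c')), S⟩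
  | stloc_ref {M G L S x r} (h1 : stlocOK M L x) :
      Step typeOf ResTy Addr boolP (Op.StLoc x) ⟨M, G, L, SV.ref r :: S⟩
        ⟨M, G, upd L x (some (Sum.inr r)), S⟩
  | borrowloc {M G L S x c} (h1 : L x = some (Sum.inl c)) :
      Step typeOf ResTy Addr boolP (Op.BorrowLoc x) ⟨M, G, L, S⟩
        ⟨M, G, L, SV.ref ⟨c, [], true⟩ :: S⟩
  | borrowfield {M G L S c p q f tv flds t tvf} (h1 : M c = some tv)
      (h2 : subTV tv p = some (Val.record flds, t)) (h3 : lookupF flds f = some tvf) :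
      Step typeOf ResTy Addr boolP (Op.BorrowField f) ⟨M, G, L, SV.ref ⟨c, p, q⟩ :: S⟩
        ⟨M, G, L, SV.ref ⟨c, p ++ [f], q⟩ :: S⟩
  | freezeref {M G L S c p q} :
      Step typeOf ResTy Addr boolP Op.FreezeRef ⟨M, G, L, SV.ref ⟨c, p, q⟩ :: S⟩
        ⟨M, G, L, SV.ref ⟨c, p, false⟩ :: S⟩
  | readref {M G L S c p q tv v} (h1 : M c = some tv)
      (h2 : subTV tv p = some (v, MTag.U)) :
      Step typeOf ResTy Addr boolP Op.ReadRef ⟨M, G, L, SV.ref ⟨c, p, q⟩ :: S⟩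
        ⟨M, G, L, SV.tv (v, MTag.U) :: S⟩
  | writeref {M G L S c p tv v v' tv2} (h1 : M c = some tv)
      (h2 : subTV tv p = some (v, MTag.U))
      (h3 : setSubTV tv p (v', MTag.U) = some tv2) :
      Step typeOf ResTy Addr boolP Op.WriteRef
        ⟨M, G, L, SV.tv (v', MTag.U) :: SV.ref ⟨c, p, true⟩ :: S⟩
        ⟨upd M c (some tv2), G, L, S⟩
  | pop_tv {M G L S v} :
      Step typeOf ResTy Addr boolP Op.Pop ⟨M, G, L, SV.tv (v, MTag.U) :: S⟩ ⟨M, G, L, S⟩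
  | pop_ref {M G L S r} :
      Step typeOf ResTy Addr boolP Op.Pop ⟨M, G, L, SV.ref r :: S⟩ ⟨M, G, L, S⟩
  | pack_r {M G L S s flds t} (h1 : s ∈ ResTy) (h2 : typeOf (Val.record flds) = s)
      (h3 : flds ≠ []) (h4 : (flds.map Prod.fst).Nodup)
      (h5 : t ∉ resources (MState.mk M G L ((flds.map fun ft => SV.tv ft.2) ++ S))) :
      Step typeOf ResTy Addr boolP (Op.Pack s)
        ⟨M, G, L, (flds.map fun ft => SV.tv ft.2) ++ S⟩
        ⟨M, G, L, SV.tv (Val.record flds, MTag.res t) :: S⟩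
  | pack_u {M G L S s flds} (h1 : s ∉ ResTy) (h2 : typeOf (Val.record flds) = s)
      (h3 : flds ≠ []) (h4 : (flds.map Prod.fst).Nodup)
      (h5 : ∀ f v tg, (f, (v, tg)) ∈ flds → tg = MTag.U) :
      Step typeOf ResTy Addr boolP (Op.Pack s)
        ⟨M, G, L, (flds.map fun ft => SV.tv ft.2) ++ S⟩
        ⟨M, G, L, SV.tv (Val.record flds, MTag.U) :: S⟩
  | unpack {M G L S s flds t} :
      Step typeOf ResTy Addr boolP (Op.Unpack s)
        ⟨M, G, L, SV.tv (Val.record flds, t) :: S⟩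
        ⟨M, G, L, (flds.map fun ft => SV.tv ft.2) ++ S⟩
  | loadconst {M G L S a} :
      Step typeOf ResTy Addr boolP (Op.LoadConst a) ⟨M, G, L, S⟩
        ⟨M, G, L, SV.tv (Val.prim a, MTag.U) :: S⟩
  | stackop {M G L S n op legal vs} (h1 : vs.length = n) (h2 : legal vs) :
      Step typeOf ResTy Addr boolP (Op.StackOp n op legal)
        ⟨M, G, L, (vs.map fun v => SV.tv (Val.prim v, MTag.U)) ++ S⟩
        ⟨M, G, L, SV.tv (Val.prim (op vs), MTag.U) :: S⟩
  | moveto {M G L S a v t s c} (h1 : a ∈ Addr) (h2 : typeOf v = s) (h3 : s ∈ ResTy)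
      (h4 : G (a, s) = none) (h5 : M c = none) :
      Step typeOf ResTy Addr boolP (Op.MoveTo s)
        ⟨M, G, L, SV.tv (Val.prim a, MTag.U) :: SV.tv (v, t) :: S⟩
        ⟨upd M c (some (v, t)), upd G (a, s) (some c), L, S⟩
  | movefrom {M G L S a s c tv'} (h1 : s ∈ ResTy) (h2 : a ∈ Addr)
      (h3 : G (a, s) = some c) (h4 : M c = some tv') :
      Step typeOf ResTy Addr boolP (Op.MoveFrom s)
        ⟨M, G, L, SV.tv (Val.prim a, MTag.U) :: S⟩
        ⟨upd M c none, upd G (a, s) none, L, SV.tv tv' :: S⟩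
  | borrowglobal {M G L S a s c} (h1 : s ∈ ResTy) (h2 : a ∈ Addr)
      (h3 : G (a, s) = some c) :
      Step typeOf ResTy Addr boolP (Op.BorrowGlobal s)
        ⟨M, G, L, SV.tv (Val.prim a, MTag.U) :: S⟩
        ⟨M, G, L, SV.ref ⟨c, [], true⟩ :: S⟩
  | existsg {M G L S a s b} (h1 : a ∈ Addr) (h2 : b = true ↔ ∃ c, G (a, s) = some c) :
      Step typeOf ResTy Addr boolP (Op.ExistsG s)
        ⟨M, G, L, SV.tv (Val.prim a, MTag.U) :: S⟩
        ⟨M, G, L, SV.tv (Val.prim (boolP b), MTag.U) :: S⟩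

/-- Program steps: execute the current instruction and increment the program counter,
or take a `Branch` step, which pops a location holding a tagged Boolean. -/
inductive PStep [DecidableEq Loc] [DecidableEq Prim] [DecidableEq Var] [DecidableEq Fld]
    [DecidableEq Ty] (typeOf : Val Prim Fld RTag → Ty) (ResTy : Set Ty)
    (Addr : Set Prim) (boolP : Bool → Prim) (P : ℕ → Op Prim Var Fld Ty) :
    ℕ × MState Loc Prim Var Fld RTag Ty → ℕ × MState Loc Prim Var Fld RTag Ty → Prop where
  | exec {pc op σ σ'} (h : P pc = op) (hs : Step typeOf ResTy Addr boolP op σ σ') :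
      PStep typeOf ResTy Addr boolP P (pc, σ) (pc + 1, σ')
  | branch_t {pc l M G L c S} (h : P pc = Op.Branch l)
      (hb : M c = some (Val.prim (boolP true), MTag.U)) :
      PStep typeOf ResTy Addr boolP P (pc, ⟨M, G, L, SV.loc c :: S⟩) (l, ⟨M, G, L, S⟩)
  | branch_f {pc l M G L c S} (h : P pc = Op.Branch l)
      (hb : M c = some (Val.prim (boolP false), MTag.U)) :
      PStep typeOf ResTy Addr boolP P (pc, ⟨M, G, L, SV.loc c :: S⟩) (pc + 1, ⟨M, G, L, S⟩)

section Aux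

variable [DecidableEq Fld]

/-- A resource tag occurs in a tagged value. -/
def tagIn (tv : TVal Prim Fld RTag) (t : RTag) : Prop :=
  ∃ p v, subTV tv p = some (v, MTag.res t)

lemma lookupF_mem {α : Type} {l : List (Fld × α)} {f : Fld} {a : α}
    (h : lookupF l f = some a) : (f, a) ∈ l := by
  induction l with
  | nil => simp [lookupF] at h
  | cons hd tl ih =>
    obtain ⟨g, b⟩ := hd
    simp only [lookupF] at h
    split at h
    · cases h; subst_vars; simp
    · simp [ih h]

lemma mem_lookupF {α : Type} {l : List (Fld × α)} {f : Fld} {a : α}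
    (hnd : (l.map Prod.fst).Nodup) (h : (f, a) ∈ l) : lookupF l f = some a := by
  induction l with
  | nil => simp at h
  | cons hd tl ih =>
    obtain ⟨g, b⟩ := hd
    simp only [List.map_cons, List.nodup_cons] at hnd
    rcases List.mem_cons.mp h with h | h
    · cases h; simp [lookupF]
    · have hgf : g ≠ f := by
        intro hgf
        exact hnd.1 (List.mem_map.mpr ⟨(f, a), h, by simp [hgf]⟩)
      simp [lookupF, hgf, ih hnd.2 h]

lemma subTV_nil (tv : TVal Prim Fld RTag) : subTV tv [] = some tv := by
  obtain ⟨v, tg⟩ := tv; cases v <;> rfl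

lemma subTV_append (tv : TVal Prim Fld RTag) (p p' : List Fld) :
    subTV tv (p ++ p') = (subTV tv p).bind (fun tv' => subTV tv' p') := by
  induction p generalizing tv with
  | nil => simp [subTV]
  | cons f q ih =>
    obtain ⟨v, tg⟩ := tv
    cases v with
    | prim a => simp [subTV]
    | record flds =>
      simp only [List.cons_append, subTV]
      cases hlk : lookupF flds f with
      | none => simp
      | some tvf => simp [ih]

lemma tagIn_sub {tv tv' : TVal Prim Fld RTag} {p : List Fld}
    (h : subTV tv p = some tv') {t : RTag} (h' : tagIn tv' t) : tagIn tv t := by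
  obtain ⟨q, v, hq⟩ := h'
  exact ⟨p ++ q, v, by rw [subTV_append, h]; exact hq⟩

lemma WFTV_iffU {typeOf : Val Prim Fld RTag → Ty} {ResTy : Set Ty} {tv : TVal Prim Fld RTag}
    (h : WFTV typeOf ResTy tv) : typeOf tv.1 ∈ ResTy ↔ tv.2 ≠ MTag.U := by
  cases h with
  | prim p t hiff => exact hiff
  | record flds t hne hnodup hwf hiff hnores => exact hiff

lemma subTV_WF {typeOf : Val Prim Fld RTag → Ty} {ResTy : Set Ty}
    {tv tv' : TVal Prim Fld RTag} {p : List Fld}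
    (h : WFTV typeOf ResTy tv) (hs : subTV tv p = some tv') : WFTV typeOf ResTy tv' := by
  induction p generalizing tv with
  | nil => simp [subTV] at hs; subst hs; exact h
  | cons f q ih =>
    obtain ⟨v, tg⟩ := tv
    cases v with
    | prim a => simp [subTV] at hs
    | record flds =>
      simp only [subTV] at hs
      cases hlk : lookupF flds f with
      | none => rw [hlk] at hs; simp at hs
      | some tvf =>
        rw [hlk] at hs
        cases h with
        | record _ _ hne hnodup hwf hiff hnores =>
          exact ih (hwf f tvf (lookupF_mem hlk)) hs

lemma WFTV_notag {typeOf : Val Prim Fld RTag → Ty} {ResTy : Set Ty} {tv : TVal Prim Fld RTag}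
    (h : WFTV typeOf ResTy tv) : tv.2 = MTag.U → ∀ t, ¬ tagIn tv t := by
  induction h with
  | prim p tg hiff =>
    rintro hU t ⟨pth, v, hsub⟩
    cases pth with
    | nil => simp at hU; simp [subTV, hU] at hsub
    | cons f q => simp [subTV] at hsub
  | record flds tg hne hnodup hwf hiff hnores ih =>
    rintro hU t ⟨pth, v, hsub⟩
    simp at hU; subst hU
    cases pth with
    | nil => simp [subTV] at hsub
    | cons f q =>
      simp only [subTV] at hsub
      cases hlk : lookupF flds f with
      | none => rw [hlk] at hsub; simp at hsub
      | some tvf =>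
        rw [hlk] at hsub
        have hmem := lookupF_mem hlk
        have hRt : typeOf (Val.record flds) ∉ ResTy := fun hx => (hiff.mp hx) rfl
        have hnr := hnores hRt f tvf hmem
        have hwff := hwf f tvf hmem
        have hU' : tvf.2 = MTag.U := by
          by_contra hne'
          exact hnr ((WFTV_iffU hwff).mpr hne')
        exact ih f tvf hmem hU' t ⟨q, v, hsub⟩

lemma tagIn_prim {a : Prim} {t : RTag} : ¬ tagIn ((Val.prim a, MTag.U) : TVal Prim Fld RTag) t := by
  rintro ⟨pth, v, hsub⟩
  cases pth with
  | nil => simp [subTV] at hsub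
  | cons f q => simp [subTV] at hsub

lemma tagIn_record {flds : List (Fld × TVal Prim Fld RTag)} {tg : MTag RTag} {t : RTag} :
    tagIn (Val.record flds, tg) t ↔
      tg = MTag.res t ∨ ∃ f tvf, lookupF flds f = some tvf ∧ tagIn tvf t := by
  constructor
  · rintro ⟨pth, v, hsub⟩
    cases pth with
    | nil => left; simp [subTV] at hsub; exact hsub.2
    | cons f q =>
      simp only [subTV] at hsub
      cases hlk : lookupF flds f with
      | none => rw [hlk] at hsub; simp at hsub
      | some tvf => rw [hlk] at hsub; exact Or.inr ⟨f, tvf, hlk, q, v, hsub⟩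
  · rintro (rfl | ⟨f, tvf, hlk, q, v, hsub⟩)
    · exact ⟨[], Val.record flds, rfl⟩
    · exact ⟨f :: q, v, by simp only [subTV]; rw [hlk]; exact hsub⟩

lemma lookupF_cons {α : Type} (hd : Fld × α) (tl : List (Fld × α)) (f : Fld) :
    lookupF (hd :: tl) f = if hd.1 = f then some hd.2 else lookupF tl f := by
  obtain ⟨g, a⟩ := hd; rfl

lemma lookupF_map_update {α : Type} {flds : List (Fld × α)} {f g : Fld} {a' : α} :
    lookupF (flds.map fun ft => if ft.1 = f then (ft.1, a') else ft) g =
      if g = f then (lookupF flds f).map (fun _ => a') else lookupF flds g := by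
  induction flds with
  | nil => simp [lookupF]
  | cons hd tl ih =>
    obtain ⟨h1, h2⟩ := hd
    by_cases h1f : h1 = f
    · by_cases hgf : g = f
      · simp [lookupF_cons, h1f, hgf, ih]
      · have hfg : f ≠ g := fun h => hgf h.symm
        simp [lookupF_cons, h1f, hgf, hfg, ih]
    · by_cases hgf : g = f
      · subst hgf
        simp [lookupF_cons, h1f, ih]
      · simp [lookupF_cons, h1f, hgf, ih]

lemma tagIn_setSubTV {tv new tv2 : TVal Prim Fld RTag} {p : List Fld}
    (h : setSubTV tv p new = some tv2) {t : RTag} (ht : tagIn tv2 t) :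
    tagIn tv t ∨ tagIn new t := by
  induction p generalizing tv tv2 with
  | nil => simp [setSubTV] at h; subst h; exact Or.inr ht
  | cons f q ih =>
    obtain ⟨v, tg⟩ := tv
    cases v with
    | prim a => simp [setSubTV] at h
    | record flds =>
      cases hlk : lookupF flds f with
      | none => simp [setSubTV, hlk] at h
      | some tvf =>
        cases hset : setSubTV tvf q new with
        | none => simp [setSubTV, hlk, hset] at h
        | some tvf' =>
          simp only [setSubTV, hlk, hset, Option.some.injEq] at h
          subst h
          rcases tagIn_record.mp ht with rfl | ⟨g, tvg, hlk', hg⟩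
          · exact Or.inl (tagIn_record.mpr (Or.inl rfl))
          · rw [lookupF_map_update] at hlk'
            by_cases hgf : g = f
            · subst hgf
              rw [if_pos rfl, hlk] at hlk'
              simp only [Option.map_some] at hlk'
              cases hlk'
              rcases ih hset hg with h' | h'
              · exact Or.inl (tagIn_record.mpr (Or.inr ⟨g, tvf, hlk, h'⟩))
              · exact Or.inr h'
            · rw [if_neg hgf] at hlk'
              exact Or.inl (tagIn_record.mpr (Or.inr ⟨g, tvg, hlk', hg⟩))

lemma tagIn_setSubTV' {tv new old tv2 : TVal Prim Fld RTag} {p : List Fld}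
    (h : setSubTV tv p new = some tv2) (hold : subTV tv p = some old)
    {t : RTag} (ht : tagIn tv t) : tagIn tv2 t ∨ tagIn old t := by
  induction p generalizing tv tv2 with
  | nil =>
    simp [setSubTV] at h; simp [subTV] at hold; subst h; subst hold
    exact Or.inr ht
  | cons f q ih =>
    obtain ⟨v, tg⟩ := tv
    cases v with
    | prim a => simp [setSubTV] at h
    | record flds =>
      cases hlk : lookupF flds f with
      | none => simp [setSubTV, hlk] at h
      | some tvf =>
        cases hset : setSubTV tvf q new with
        | none => simp [setSubTV, hlk, hset] at h
        | some tvf' =>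
          simp only [setSubTV, hlk, hset, Option.some.injEq] at h
          simp only [subTV, hlk] at hold
          subst h
          rcases tagIn_record.mp ht with rfl | ⟨g, tvg, hlk', hg⟩
          · exact Or.inl (tagIn_record.mpr (Or.inl rfl))
          · by_cases hgf : g = f
            · subst hgf
              rw [hlk] at hlk'
              cases hlk'
              rcases ih hset hold hg with h' | h'
              · refine Or.inl (tagIn_record.mpr (Or.inr ⟨g, tvf', ?_, h'⟩))
                rw [lookupF_map_update, if_pos rfl, hlk]; rfl
              · exact Or.inr h'
            · refine Or.inl (tagIn_record.mpr (Or.inr ⟨g, tvg, ?_, hg⟩))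
              rw [lookupF_map_update, if_neg hgf]; exact hlk'

/-- Tags occurring in the memory. -/
def memT (M : Loc → Option (TVal Prim Fld RTag)) (t : RTag) : Prop :=
  ∃ c tv, M c = some tv ∧ tagIn tv t

/-- Tags occurring on the stack. -/
def stkT (S : List (SVal Loc Prim Fld RTag)) (t : RTag) : Prop :=
  ∃ tv, SV.tv tv ∈ S ∧ tagIn tv t

lemma mem_resources {σ : MState Loc Prim Var Fld RTag Ty} {t : RTag} :
    t ∈ resources σ ↔ memT σ.M t ∨ stkT σ.S t := by
  simp only [resources, Set.mem_setOf_eq, memT, stkT, tagIn]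
  constructor
  · rintro (⟨c, tv, p, v, h1, h2⟩ | ⟨tv, h1, p, v, h2⟩)
    · exact Or.inl ⟨c, tv, h1, p, v, h2⟩
    · exact Or.inr ⟨tv, h1, p, v, h2⟩
  · rintro (⟨c, tv, h1, p, v, h2⟩ | ⟨tv, h1, p, v, h2⟩)
    · exact Or.inl ⟨c, tv, p, v, h1, h2⟩
    · exact Or.inr ⟨tv, h1, p, v, h2⟩

lemma SVtv_inj {tv tv' : TVal Prim Fld RTag} (h : (SV.tv tv : SVal Loc Prim Fld RTag) = SV.tv tv') :
    tv = tv' := by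
  simpa [SV.tv] using h

lemma stkT_cons_tv {tv0 : TVal Prim Fld RTag} {S : List (SVal Loc Prim Fld RTag)} {t : RTag} :
    stkT (SV.tv tv0 :: S) t ↔ tagIn tv0 t ∨ stkT S t := by
  constructor
  · rintro ⟨tv, h1, h2⟩
    rcases List.mem_cons.mp h1 with h | h
    · rw [SVtv_inj h] at h2; exact Or.inl h2
    · exact Or.inr ⟨tv, h, h2⟩
  · rintro (h | ⟨tv, h1, h2⟩)
    · exact ⟨tv0, List.mem_cons_self, h⟩
    · exact ⟨tv, List.mem_cons_of_mem _ h1, h2⟩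

lemma stkT_cons_ref {r : MRef Loc Fld} {S : List (SVal Loc Prim Fld RTag)} {t : RTag} :
    stkT (SV.ref r :: S) t ↔ stkT S t := by
  constructor
  · rintro ⟨tv, h1, h2⟩
    rcases List.mem_cons.mp h1 with h | h
    · simp [SV.tv, SV.ref] at h
    · exact ⟨tv, h, h2⟩
  · rintro ⟨tv, h1, h2⟩
    exact ⟨tv, List.mem_cons_of_mem _ h1, h2⟩

lemma stkT_cons_loc {c : Loc} {S : List (SVal Loc Prim Fld RTag)} {t : RTag} :
    stkT (SV.loc c :: S) t ↔ stkT S t := by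
  constructor
  · rintro ⟨tv, h1, h2⟩
    rcases List.mem_cons.mp h1 with h | h
    · simp [SV.tv, SV.loc] at h
    · exact ⟨tv, h, h2⟩
  · rintro ⟨tv, h1, h2⟩
    exact ⟨tv, List.mem_cons_of_mem _ h1, h2⟩

lemma stkT_append_map {flds : List (Fld × TVal Prim Fld RTag)}
    {S : List (SVal Loc Prim Fld RTag)} {t : RTag} :
    stkT ((flds.map fun ft => SV.tv ft.2) ++ S) t ↔
      (∃ ft ∈ flds, tagIn ft.2 t) ∨ stkT S t := by
  constructor
  · rintro ⟨tv, h1, h2⟩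
    rcases List.mem_append.mp h1 with h | h
    · obtain ⟨ft, hft, heq⟩ := List.mem_map.mp h
      rw [← SVtv_inj heq] at h2
      exact Or.inl ⟨ft, hft, h2⟩
    · exact Or.inr ⟨tv, h, h2⟩
  · rintro (⟨ft, hft, h⟩ | ⟨tv, h1, h2⟩)
    · exact ⟨ft.2, List.mem_append.mpr (Or.inl (List.mem_map.mpr ⟨ft, hft, rfl⟩)), h⟩
    · exact ⟨tv, List.mem_append.mpr (Or.inr h1), h2⟩

lemma memT_upd [DecidableEq Loc] {M : Loc → Option (TVal Prim Fld RTag)} {c : Loc}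
    {w : Option (TVal Prim Fld RTag)} {t : RTag} :
    memT (upd M c w) t ↔ (∃ tv, w = some tv ∧ tagIn tv t) ∨
      (∃ c' tv, c' ≠ c ∧ M c' = some tv ∧ tagIn tv t) := by
  constructor
  · rintro ⟨c', tv, h1, h2⟩
    by_cases hc : c' = c
    · subst hc; rw [upd, if_pos rfl] at h1; exact Or.inl ⟨tv, h1, h2⟩
    · rw [upd, if_neg hc] at h1; exact Or.inr ⟨c', tv, hc, h1, h2⟩
  · rintro (⟨tv, h1, h2⟩ | ⟨c', tv, hc, h1, h2⟩)
    · exact ⟨c, tv, by rw [upd, if_pos rfl]; exact h1, h2⟩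
    · exact ⟨c', tv, by rw [upd, if_neg hc]; exact h1, h2⟩

lemma memT_split {M : Loc → Option (TVal Prim Fld RTag)} {c : Loc}
    {tv0 : TVal Prim Fld RTag} (h : M c = some tv0) {t : RTag} :
    memT M t ↔ tagIn tv0 t ∨ ∃ c' tv, c' ≠ c ∧ M c' = some tv ∧ tagIn tv t := by
  constructor
  · rintro ⟨c', tv, h1, h2⟩
    by_cases hc : c' = c
    · subst hc; rw [h] at h1; cases h1; exact Or.inl h2
    · exact Or.inr ⟨c', tv, hc, h1, h2⟩
  · rintro (h' | ⟨c', tv, hc, h1, h2⟩)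
    · exact ⟨c, tv0, h, h'⟩
    · exact ⟨c', tv, h1, h2⟩

lemma memT_none {M : Loc → Option (TVal Prim Fld RTag)} {c : Loc}
    (h : M c = none) {t : RTag} :
    (∃ c' tv, c' ≠ c ∧ M c' = some tv ∧ tagIn tv t) ↔ memT M t := by
  constructor
  · rintro ⟨c', tv, _, h1, h2⟩; exact ⟨c', tv, h1, h2⟩
  · rintro ⟨c', tv, h1, h2⟩
    refine ⟨c', tv, fun hc => ?_, h1, h2⟩
    subst hc; rw [h] at h1; cases h1

lemma upd_same {α β : Type} [DecidableEq α] (f : α → Option β) (a : α) (b : Option β) :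
    upd f a b a = b := by simp [upd]

lemma upd_ne {α β : Type} [DecidableEq α] (f : α → Option β) (a : α) (b : Option β)
    {x : α} (h : x ≠ a) : upd f a b x = f x := by simp [upd, h]

lemma memT_delete_iff [DecidableEq Loc] {M : Loc → Option (TVal Prim Fld RTag)} {c : Loc}
    {tv : TVal Prim Fld RTag} (h : M c = some tv) (t : RTag) :
    (memT (upd M c none) t ∨ tagIn tv t) ↔ memT M t := by
  constructor
  · rintro (⟨c', tv', h1, h2⟩ | ht)
    · by_cases hc : c' = c
      · rw [hc, upd_same] at h1; cases h1
      · rw [upd_ne _ _ _ hc] at h1; exact ⟨c', tv', h1, h2⟩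
    · exact ⟨c, tv, h, ht⟩
  · rintro ⟨c', tv', h1, h2⟩
    by_cases hc : c' = c
    · rw [hc, h] at h1
      injection h1 with h1'
      rw [← h1'] at h2
      exact Or.inr h2
    · exact Or.inl ⟨c', tv', by rw [upd_ne _ _ _ hc]; exact h1, h2⟩

lemma memT_add_iff [DecidableEq Loc] {M : Loc → Option (TVal Prim Fld RTag)} {c : Loc}
    {tv : TVal Prim Fld RTag} (h : M c = none) (t : RTag) :
    memT (upd M c (some tv)) t ↔ memT M t ∨ tagIn tv t := by
  constructor
  · rintro ⟨c', tv', h1, h2⟩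
    by_cases hc : c' = c
    · rw [hc, upd_same] at h1
      injection h1 with h1'
      rw [← h1'] at h2
      exact Or.inr h2
    · rw [upd_ne _ _ _ hc] at h1; exact Or.inl ⟨c', tv', h1, h2⟩
  · rintro (⟨c', tv', h1, h2⟩ | ht)
    · refine ⟨c', tv', ?_, h2⟩
      have hc : c' ≠ c := by rintro rfl; rw [h] at h1; cases h1
      rw [upd_ne _ _ _ hc]; exact h1
    · exact ⟨c, tv, by rw [upd_same], ht⟩

lemma memT_set_iff [DecidableEq Loc] {M : Loc → Option (TVal Prim Fld RTag)} {c : Loc}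
    {tv tv2 : TVal Prim Fld RTag} (h : M c = some tv)
    (hiff : ∀ t, tagIn tv2 t ↔ tagIn tv t) (t : RTag) :
    memT (upd M c (some tv2)) t ↔ memT M t := by
  constructor
  · rintro ⟨c', tv', h1, h2⟩
    by_cases hc : c' = c
    · rw [hc, upd_same] at h1
      injection h1 with h1'
      rw [← h1'] at h2
      exact ⟨c, tv, h, (hiff t).mp h2⟩
    · rw [upd_ne _ _ _ hc] at h1; exact ⟨c', tv', h1, h2⟩
  · rintro ⟨c', tv', h1, h2⟩
    by_cases hc : c' = c
    · rw [hc, h] at h1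
      injection h1 with h1'
      rw [← h1'] at h2
      exact ⟨c, tv2, by rw [upd_same], (hiff t).mpr h2⟩
    · exact ⟨c', tv', by rw [upd_ne _ _ _ hc]; exact h1, h2⟩

lemma setOf_lt_succ {m : ℕ} {C : ℕ → RTag → Prop} :
    {t : RTag | ∃ i, i < m + 1 ∧ C i t} = {t | ∃ i, i < m ∧ C i t} ∪ {t | C m t} := by
  ext t
  simp only [Set.mem_setOf_eq, Set.mem_union, Nat.lt_succ_iff_lt_or_eq]
  constructor
  · rintro ⟨i, (h | rfl), hC⟩
    · exact Or.inl ⟨i, h, hC⟩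
    · exact Or.inr hC
  · rintro (⟨i, h, hC⟩ | hC)
    · exact ⟨i, Or.inl h, hC⟩
    · exact ⟨m, Or.inr rfl, hC⟩

lemma stkT_append_prim {vs : List Prim} {S : List (SVal Loc Prim Fld RTag)} {t : RTag} :
    stkT ((vs.map fun v => SV.tv ((Val.prim v, MTag.U) : TVal Prim Fld RTag)) ++ S) t ↔
      stkT S t := by
  constructor
  · rintro ⟨tv, h1, h2⟩
    rcases List.mem_append.mp h1 with h | h
    · obtain ⟨a, _, heq⟩ := List.mem_map.mp h
      rw [← SVtv_inj heq] at h2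
      exact absurd h2 tagIn_prim
    · exact ⟨tv, h, h2⟩
  · rintro ⟨tv, h1, h2⟩
    exact ⟨tv, List.mem_append.mpr (Or.inr h1), h2⟩

lemma alg_neutral {A RI RE R : Set RTag} (h : R = (A ∪ RI) \ RE) :
    R = (A ∪ (RI ∪ (∅ : Set RTag))) \ (RE ∪ ∅) := by simpa using h

lemma alg_pack {A RI RE R : Set RTag} {t0 : RTag} (h : R = (A ∪ RI) \ RE)
    (ht : t0 ∉ RE) : R ∪ {t0} = (A ∪ (RI ∪ {t0})) \ (RE ∪ (∅ : Set RTag)) := by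
  subst h; ext t
  simp only [Set.union_empty, Set.mem_union, Set.mem_diff, Set.mem_singleton_iff]
  constructor
  · rintro (⟨hA, hRE⟩ | rfl)
    · exact ⟨hA.imp_right Or.inl, hRE⟩
    · exact ⟨Or.inr (Or.inr rfl), ht⟩
  · rintro ⟨(hA | hRI | rfl), hRE⟩
    · exact Or.inl ⟨Or.inl hA, hRE⟩
    · exact Or.inl ⟨Or.inr hRI, hRE⟩
    · exact Or.inr rfl

lemma alg_unpack {A RI RE R : Set RTag} {t0 : RTag} (h : R = (A ∪ RI) \ RE) :
    R \ {t0} = (A ∪ (RI ∪ (∅ : Set RTag))) \ (RE ∪ {t0}) := by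
  subst h; ext t
  simp only [Set.union_empty, Set.mem_union, Set.mem_diff, Set.mem_singleton_iff]
  tauto

end Aux

/-- **Resource safety** (Theorem 4.1): for a well-formed execution sequence
`π = (pc₀,σ₀),…,(pcₙ,σₙ)` of a call-free Move bytecode program `P`,
`resources(σₙ) = (resources(σ₀) ∪ RI(π)) \ RE(π)`. -/
theorem resource_safety {Loc Prim Var Fld RTag Ty : Type}
    [DecidableEq Loc] [DecidableEq Prim] [DecidableEq Var] [DecidableEq Fld] [DecidableEq Ty]
    [Countable Loc] [Countable Prim] [Countable Var] [Countable RTag] [Finite Fld]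
    (typeOf : Val Prim Fld RTag → Ty) (ResTy : Set Ty) (Addr : Set Prim)
    (boolP : Bool → Prim) (P : ℕ → Op Prim Var Fld Ty)
    (n : ℕ) (pcs : ℕ → ℕ) (σs : ℕ → MState Loc Prim Var Fld RTag Ty)
    -- π consists of consecutive program steps of P:
    (hsteps : ∀ i, i < n →
      PStep typeOf ResTy Addr boolP P (pcs i, σs i) (pcs (i + 1), σs (i + 1)))
    -- the tag chosen by each Pack step occurs neither in the current state
    -- nor anywhere earlier in the execution:
    (hfresh : ∀ i, i < n → ∀ (s : Ty) (v : Val Prim Fld RTag) (t : RTag)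
      (S' : List (SVal Loc Prim Fld RTag)), P (pcs i) = Op.Pack s →
      (σs (i + 1)).S = SV.tv (v, MTag.res t) :: S' → ∀ j, j ≤ i → t ∉ resources (σs j))
    -- π is well-formed:
    (hwf : ∀ i, i ≤ n → WFState typeOf ResTy (σs i)) :
    resources (σs n) =
      (resources (σs 0) ∪
        {t : RTag | ∃ i, i < n ∧ (∃ s, P (pcs i) = Op.Pack s) ∧
          ∃ v S', (σs (i + 1)).S = SV.tv (v, MTag.res t) :: S'}) \
      {t : RTag | ∃ i, i < n ∧ (∃ s, P (pcs i) = Op.Unpack s) ∧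
          ∃ v S', (σs i).S = SV.tv (v, MTag.res t) :: S'} := by
  suffices H : ∀ m, m ≤ n → resources (σs m) =
      (resources (σs 0) ∪
        {t : RTag | ∃ i, i < m ∧ (∃ s, P (pcs i) = Op.Pack s) ∧
          ∃ v S', (σs (i + 1)).S = SV.tv (v, MTag.res t) :: S'}) \
      {t : RTag | ∃ i, i < m ∧ (∃ s, P (pcs i) = Op.Unpack s) ∧
          ∃ v S', (σs i).S = SV.tv (v, MTag.res t) :: S'} by
    exact H n le_rfl
  intro m
  induction m with
  | zero => intro _; ext t; simp
  | succ m ih =>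
    intro hm1
    have hm : m < n := hm1
    have IH := ih hm.le
    have hstep := hsteps m hm
    generalize hσ : σs m = σm at hstep
    generalize hσ' : σs (m + 1) = σm' at hstep
    generalize hpc' : pcs (m + 1) = pc' at hstep
    cases hstep with
    | branch_t h hb =>
      have hR : resources (σs (m + 1)) = resources (σs m) := by
        rw [hσ, hσ']
        ext t
        simp only [mem_resources, stkT_cons_loc]
      have hCI : {t : RTag | (∃ s, P (pcs m) = Op.Pack s) ∧
          ∃ v S', (σs (m + 1)).S = SV.tv (v, MTag.res t) :: S'} = ∅ := by
        ext t
        simp only [Set.mem_setOf_eq, Set.mem_empty_iff_false, iff_false]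
        rintro ⟨⟨s, hP⟩, -⟩
        rw [h] at hP
        cases hP
      have hCE : {t : RTag | (∃ s, P (pcs m) = Op.Unpack s) ∧
          ∃ v S', (σs m).S = SV.tv (v, MTag.res t) :: S'} = ∅ := by
        ext t
        simp only [Set.mem_setOf_eq, Set.mem_empty_iff_false, iff_false]
        rintro ⟨⟨s, hP⟩, -⟩
        rw [h] at hP
        cases hP
      rw [setOf_lt_succ, setOf_lt_succ, hCI, hCE, ← hσ', hR]
      exact alg_neutral IH
    | branch_f h hb =>
      have hR : resources (σs (m + 1)) = resources (σs m) := by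
        rw [hσ, hσ']
        ext t
        simp only [mem_resources, stkT_cons_loc]
      have hCI : {t : RTag | (∃ s, P (pcs m) = Op.Pack s) ∧
          ∃ v S', (σs (m + 1)).S = SV.tv (v, MTag.res t) :: S'} = ∅ := by
        ext t
        simp only [Set.mem_setOf_eq, Set.mem_empty_iff_false, iff_false]
        rintro ⟨⟨s, hP⟩, -⟩
        rw [h] at hP
        cases hP
      have hCE : {t : RTag | (∃ s, P (pcs m) = Op.Unpack s) ∧
          ∃ v S', (σs m).S = SV.tv (v, MTag.res t) :: S'} = ∅ := by
        ext t
        simp only [Set.mem_setOf_eq, Set.mem_empty_iff_false, iff_false]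
        rintro ⟨⟨s, hP⟩, -⟩
        rw [h] at hP
        cases hP
      rw [setOf_lt_succ, setOf_lt_succ, hCI, hCE, ← hσ', hR]
      exact alg_neutral IH
    | exec h hs =>
      cases hs with
      | @mvloc_loc M G L S x c tv h1 h2 =>
        have hR : resources (σs (m + 1)) = resources (σs m) := by
          rw [hσ, hσ']
          ext t
          simp only [mem_resources, stkT_cons_tv]
          rw [← or_assoc, memT_delete_iff h2 t]
        have hCI : {t : RTag | (∃ s, P (pcs m) = Op.Pack s) ∧
            ∃ v S', (σs (m + 1)).S = SV.tv (v, MTag.res t) :: S'} = ∅ := by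
          ext t
          simp only [Set.mem_setOf_eq, Set.mem_empty_iff_false, iff_false]
          rintro ⟨⟨s, hP⟩, -⟩
          rw [h] at hP
          cases hP
        have hCE : {t : RTag | (∃ s, P (pcs m) = Op.Unpack s) ∧
            ∃ v S', (σs m).S = SV.tv (v, MTag.res t) :: S'} = ∅ := by
          ext t
          simp only [Set.mem_setOf_eq, Set.mem_empty_iff_false, iff_false]
          rintro ⟨⟨s, hP⟩, -⟩
          rw [h] at hP
          cases hP
        rw [setOf_lt_succ, setOf_lt_succ, hCI, hCE, ← hσ', hR]
        exact alg_neutral IH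
      | @mvloc_ref M G L S x r h1 =>
        have hR : resources (σs (m + 1)) = resources (σs m) := by
          rw [hσ, hσ']
          ext t
          simp only [mem_resources, stkT_cons_ref]
        have hCI : {t : RTag | (∃ s, P (pcs m) = Op.Pack s) ∧
            ∃ v S', (σs (m + 1)).S = SV.tv (v, MTag.res t) :: S'} = ∅ := by
          ext t
          simp only [Set.mem_setOf_eq, Set.mem_empty_iff_false, iff_false]
          rintro ⟨⟨s, hP⟩, -⟩
          rw [h] at hP
          cases hP
        have hCE : {t : RTag | (∃ s, P (pcs m) = Op.Unpack s) ∧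
            ∃ v S', (σs m).S = SV.tv (v, MTag.res t) :: S'} = ∅ := by
          ext t
          simp only [Set.mem_setOf_eq, Set.mem_empty_iff_false, iff_false]
          rintro ⟨⟨s, hP⟩, -⟩
          rw [h] at hP
          cases hP
        rw [setOf_lt_succ, setOf_lt_succ, hCI, hCE, ← hσ', hR]
        exact alg_neutral IH
      | @cploc_loc M G L S x c v h1 h2 =>
        have hw := hwf m hm.le
        rw [hσ] at hw
        have hnt := WFTV_notag (hw.gc.wf_mem c (v, MTag.U) h2) rfl
        have hR : resources (σs (m + 1)) = resources (σs m) := by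
          rw [hσ, hσ']
          ext t
          simp [mem_resources, stkT_cons_tv, hnt t]
        have hCI : {t : RTag | (∃ s, P (pcs m) = Op.Pack s) ∧
            ∃ v S', (σs (m + 1)).S = SV.tv (v, MTag.res t) :: S'} = ∅ := by
          ext t
          simp only [Set.mem_setOf_eq, Set.mem_empty_iff_false, iff_false]
          rintro ⟨⟨s, hP⟩, -⟩
          rw [h] at hP
          cases hP
        have hCE : {t : RTag | (∃ s, P (pcs m) = Op.Unpack s) ∧
            ∃ v S', (σs m).S = SV.tv (v, MTag.res t) :: S'} = ∅ := by
          ext t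
          simp only [Set.mem_setOf_eq, Set.mem_empty_iff_false, iff_false]
          rintro ⟨⟨s, hP⟩, -⟩
          rw [h] at hP
          cases hP
        rw [setOf_lt_succ, setOf_lt_succ, hCI, hCE, ← hσ', hR]
        exact alg_neutral IH
      | @cploc_ref M G L S x r h1 =>
        have hR : resources (σs (m + 1)) = resources (σs m) := by
          rw [hσ, hσ']
          ext t
          simp only [mem_resources, stkT_cons_ref]
        have hCI : {t : RTag | (∃ s, P (pcs m) = Op.Pack s) ∧
            ∃ v S', (σs (m + 1)).S = SV.tv (v, MTag.res t) :: S'} = ∅ := by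
          ext t
          simp only [Set.mem_setOf_eq, Set.mem_empty_iff_false, iff_false]
          rintro ⟨⟨s, hP⟩, -⟩
          rw [h] at hP
          cases hP
        have hCE : {t : RTag | (∃ s, P (pcs m) = Op.Unpack s) ∧
            ∃ v S', (σs m).S = SV.tv (v, MTag.res t) :: S'} = ∅ := by
          ext t
          simp only [Set.mem_setOf_eq, Set.mem_empty_iff_false, iff_false]
          rintro ⟨⟨s, hP⟩, -⟩
          rw [h] at hP
          cases hP
        rw [setOf_lt_succ, setOf_lt_succ, hCI, hCE, ← hσ', hR]
        exact alg_neutral IH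
      | @stloc_tv M G L S x tv c' h1 h2 =>
        have hR : resources (σs (m + 1)) = resources (σs m) := by
          rw [hσ, hσ']
          ext t
          simp only [mem_resources, stkT_cons_tv]
          rw [memT_add_iff h2 t, or_assoc]
        have hCI : {t : RTag | (∃ s, P (pcs m) = Op.Pack s) ∧
            ∃ v S', (σs (m + 1)).S = SV.tv (v, MTag.res t) :: S'} = ∅ := by
          ext t
          simp only [Set.mem_setOf_eq, Set.mem_empty_iff_false, iff_false]
          rintro ⟨⟨s, hP⟩, -⟩
          rw [h] at hP
          cases hP
        have hCE : {t : RTag | (∃ s, P (pcs m) = Op.Unpack s) ∧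
            ∃ v S', (σs m).S = SV.tv (v, MTag.res t) :: S'} = ∅ := by
          ext t
          simp only [Set.mem_setOf_eq, Set.mem_empty_iff_false, iff_false]
          rintro ⟨⟨s, hP⟩, -⟩
          rw [h] at hP
          cases hP
        rw [setOf_lt_succ, setOf_lt_succ, hCI, hCE, ← hσ', hR]
        exact alg_neutral IH
      | @stloc_ref M G L S x r h1 =>
        have hR : resources (σs (m + 1)) = resources (σs m) := by
          rw [hσ, hσ']
          ext t
          simp only [mem_resources, stkT_cons_ref]
        have hCI : {t : RTag | (∃ s, P (pcs m) = Op.Pack s) ∧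
            ∃ v S', (σs (m + 1)).S = SV.tv (v, MTag.res t) :: S'} = ∅ := by
          ext t
          simp only [Set.mem_setOf_eq, Set.mem_empty_iff_false, iff_false]
          rintro ⟨⟨s, hP⟩, -⟩
          rw [h] at hP
          cases hP
        have hCE : {t : RTag | (∃ s, P (pcs m) = Op.Unpack s) ∧
            ∃ v S', (σs m).S = SV.tv (v, MTag.res t) :: S'} = ∅ := by
          ext t
          simp only [Set.mem_setOf_eq, Set.mem_empty_iff_false, iff_false]
          rintro ⟨⟨s, hP⟩, -⟩
          rw [h] at hP
          cases hP
        rw [setOf_lt_succ, setOf_lt_succ, hCI, hCE, ← hσ', hR]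
        exact alg_neutral IH
      | @borrowloc M G L S x c h1 =>
        have hR : resources (σs (m + 1)) = resources (σs m) := by
          rw [hσ, hσ']
          ext t
          simp only [mem_resources, stkT_cons_ref]
        have hCI : {t : RTag | (∃ s, P (pcs m) = Op.Pack s) ∧
            ∃ v S', (σs (m + 1)).S = SV.tv (v, MTag.res t) :: S'} = ∅ := by
          ext t
          simp only [Set.mem_setOf_eq, Set.mem_empty_iff_false, iff_false]
          rintro ⟨⟨s, hP⟩, -⟩
          rw [h] at hP
          cases hP
        have hCE : {t : RTag | (∃ s, P (pcs m) = Op.Unpack s) ∧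
            ∃ v S', (σs m).S = SV.tv (v, MTag.res t) :: S'} = ∅ := by
          ext t
          simp only [Set.mem_setOf_eq, Set.mem_empty_iff_false, iff_false]
          rintro ⟨⟨s, hP⟩, -⟩
          rw [h] at hP
          cases hP
        rw [setOf_lt_succ, setOf_lt_succ, hCI, hCE, ← hσ', hR]
        exact alg_neutral IH
      | @borrowfield M G L S c p q f tv flds tg tvf h1 h2 h3 =>
        have hR : resources (σs (m + 1)) = resources (σs m) := by
          rw [hσ, hσ']
          ext t
          simp only [mem_resources, stkT_cons_ref]
        have hCI : {t : RTag | (∃ s, P (pcs m) = Op.Pack s) ∧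
            ∃ v S', (σs (m + 1)).S = SV.tv (v, MTag.res t) :: S'} = ∅ := by
          ext t
          simp only [Set.mem_setOf_eq, Set.mem_empty_iff_false, iff_false]
          rintro ⟨⟨s, hP⟩, -⟩
          rw [h] at hP
          cases hP
        have hCE : {t : RTag | (∃ s, P (pcs m) = Op.Unpack s) ∧
            ∃ v S', (σs m).S = SV.tv (v, MTag.res t) :: S'} = ∅ := by
          ext t
          simp only [Set.mem_setOf_eq, Set.mem_empty_iff_false, iff_false]
          rintro ⟨⟨s, hP⟩, -⟩
          rw [h] at hP
          cases hP
        rw [setOf_lt_succ, setOf_lt_succ, hCI, hCE, ← hσ', hR]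
        exact alg_neutral IH
      | @freezeref M G L S c p q =>
        have hR : resources (σs (m + 1)) = resources (σs m) := by
          rw [hσ, hσ']
          ext t
          simp only [mem_resources, stkT_cons_ref]
        have hCI : {t : RTag | (∃ s, P (pcs m) = Op.Pack s) ∧
            ∃ v S', (σs (m + 1)).S = SV.tv (v, MTag.res t) :: S'} = ∅ := by
          ext t
          simp only [Set.mem_setOf_eq, Set.mem_empty_iff_false, iff_false]
          rintro ⟨⟨s, hP⟩, -⟩
          rw [h] at hP
          cases hP
        have hCE : {t : RTag | (∃ s, P (pcs m) = Op.Unpack s) ∧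
            ∃ v S', (σs m).S = SV.tv (v, MTag.res t) :: S'} = ∅ := by
          ext t
          simp only [Set.mem_setOf_eq, Set.mem_empty_iff_false, iff_false]
          rintro ⟨⟨s, hP⟩, -⟩
          rw [h] at hP
          cases hP
        rw [setOf_lt_succ, setOf_lt_succ, hCI, hCE, ← hσ', hR]
        exact alg_neutral IH
      | @readref M G L S c p q tv v h1 h2 =>
        have himp : ∀ t, tagIn (v, MTag.U) t → memT M t :=
          fun t ht => ⟨c, tv, h1, tagIn_sub h2 ht⟩
        have hR : resources (σs (m + 1)) = resources (σs m) := by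
          rw [hσ, hσ']
          ext t
          simp only [mem_resources, stkT_cons_tv, stkT_cons_ref]
          constructor
          · rintro (hmm | ht | hs)
            exacts [Or.inl hmm, Or.inl (himp t ht), Or.inr hs]
          · rintro (hmm | hs)
            exacts [Or.inl hmm, Or.inr (Or.inr hs)]
        have hCI : {t : RTag | (∃ s, P (pcs m) = Op.Pack s) ∧
            ∃ v S', (σs (m + 1)).S = SV.tv (v, MTag.res t) :: S'} = ∅ := by
          ext t
          simp only [Set.mem_setOf_eq, Set.mem_empty_iff_false, iff_false]
          rintro ⟨⟨s, hP⟩, -⟩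
          rw [h] at hP
          cases hP
        have hCE : {t : RTag | (∃ s, P (pcs m) = Op.Unpack s) ∧
            ∃ v S', (σs m).S = SV.tv (v, MTag.res t) :: S'} = ∅ := by
          ext t
          simp only [Set.mem_setOf_eq, Set.mem_empty_iff_false, iff_false]
          rintro ⟨⟨s, hP⟩, -⟩
          rw [h] at hP
          cases hP
        rw [setOf_lt_succ, setOf_lt_succ, hCI, hCE, ← hσ', hR]
        exact alg_neutral IH
      | @writeref M G L S c p tv v v' tv2 h1 h2 h3 =>
        have hw := hwf m hm.le
        rw [hσ] at hw
        have hwold : WFTV typeOf ResTy (v, MTag.U) :=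
          subTV_WF (hw.gc.wf_mem c tv h1) h2
        have hwnew : WFTV typeOf ResTy (v', MTag.U) :=
          hw.gc.wf_stack _ (List.mem_cons_self)
        have hnold := WFTV_notag hwold rfl
        have hnnew := WFTV_notag hwnew rfl
        have htv2 : ∀ t, tagIn tv2 t ↔ tagIn tv t := fun t =>
          ⟨fun ht => (tagIn_setSubTV h3 ht).resolve_right (hnnew t),
           fun ht => (tagIn_setSubTV' h3 h2 ht).resolve_right (hnold t)⟩
        have hR : resources (σs (m + 1)) = resources (σs m) := by
          rw [hσ, hσ']
          ext t
          simp only [mem_resources, stkT_cons_tv, stkT_cons_ref]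
          rw [memT_set_iff h1 htv2 t]
          simp [hnnew t]
        have hCI : {t : RTag | (∃ s, P (pcs m) = Op.Pack s) ∧
            ∃ v S', (σs (m + 1)).S = SV.tv (v, MTag.res t) :: S'} = ∅ := by
          ext t
          simp only [Set.mem_setOf_eq, Set.mem_empty_iff_false, iff_false]
          rintro ⟨⟨s, hP⟩, -⟩
          rw [h] at hP
          cases hP
        have hCE : {t : RTag | (∃ s, P (pcs m) = Op.Unpack s) ∧
            ∃ v S', (σs m).S = SV.tv (v, MTag.res t) :: S'} = ∅ := by
          ext t
          simp only [Set.mem_setOf_eq, Set.mem_empty_iff_false, iff_false]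
          rintro ⟨⟨s, hP⟩, -⟩
          rw [h] at hP
          cases hP
        rw [setOf_lt_succ, setOf_lt_succ, hCI, hCE, ← hσ', hR]
        exact alg_neutral IH
      | @pop_tv M G L S v =>
        have hw := hwf m hm.le
        rw [hσ] at hw
        have hnt := WFTV_notag (hw.gc.wf_stack _ (List.mem_cons_self)) rfl
        have hR : resources (σs (m + 1)) = resources (σs m) := by
          rw [hσ, hσ']
          ext t
          simp [mem_resources, stkT_cons_tv, hnt t]
        have hCI : {t : RTag | (∃ s, P (pcs m) = Op.Pack s) ∧
            ∃ v S', (σs (m + 1)).S = SV.tv (v, MTag.res t) :: S'} = ∅ := by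
          ext t
          simp only [Set.mem_setOf_eq, Set.mem_empty_iff_false, iff_false]
          rintro ⟨⟨s, hP⟩, -⟩
          rw [h] at hP
          cases hP
        have hCE : {t : RTag | (∃ s, P (pcs m) = Op.Unpack s) ∧
            ∃ v S', (σs m).S = SV.tv (v, MTag.res t) :: S'} = ∅ := by
          ext t
          simp only [Set.mem_setOf_eq, Set.mem_empty_iff_false, iff_false]
          rintro ⟨⟨s, hP⟩, -⟩
          rw [h] at hP
          cases hP
        rw [setOf_lt_succ, setOf_lt_succ, hCI, hCE, ← hσ', hR]
        exact alg_neutral IH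
      | @pop_ref M G L S r =>
        have hR : resources (σs (m + 1)) = resources (σs m) := by
          rw [hσ, hσ']
          ext t
          simp only [mem_resources, stkT_cons_ref]
        have hCI : {t : RTag | (∃ s, P (pcs m) = Op.Pack s) ∧
            ∃ v S', (σs (m + 1)).S = SV.tv (v, MTag.res t) :: S'} = ∅ := by
          ext t
          simp only [Set.mem_setOf_eq, Set.mem_empty_iff_false, iff_false]
          rintro ⟨⟨s, hP⟩, -⟩
          rw [h] at hP
          cases hP
        have hCE : {t : RTag | (∃ s, P (pcs m) = Op.Unpack s) ∧
            ∃ v S', (σs m).S = SV.tv (v, MTag.res t) :: S'} = ∅ := by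
          ext t
          simp only [Set.mem_setOf_eq, Set.mem_empty_iff_false, iff_false]
          rintro ⟨⟨s, hP⟩, -⟩
          rw [h] at hP
          cases hP
        rw [setOf_lt_succ, setOf_lt_succ, hCI, hCE, ← hσ', hR]
        exact alg_neutral IH
      | @pack_r M G L S s flds t0 h1 h2 h3 h4 h5 =>
        rw [← hσ] at h5
        have hR : resources (σs (m + 1)) = resources (σs m) ∪ {t0} := by
          rw [hσ, hσ']
          ext t
          simp only [mem_resources, stkT_cons_tv, stkT_append_map, tagIn_record,
            Set.mem_union, Set.mem_singleton_iff]
          constructor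
          · rintro (hmm | (heq | ⟨f, tvf, hlk, htag⟩) | hs)
            · exact Or.inl (Or.inl hmm)
            · injection heq with heq'
              exact Or.inr heq'.symm
            · exact Or.inl (Or.inr (Or.inl ⟨(f, tvf), lookupF_mem hlk, htag⟩))
            · exact Or.inl (Or.inr (Or.inr hs))
          · rintro ((hmm | ⟨⟨f, tvf⟩, hft, htag⟩ | hs) | rfl)
            · exact Or.inl hmm
            · exact Or.inr (Or.inl (Or.inr ⟨f, tvf, mem_lookupF h4 hft, htag⟩))
            · exact Or.inr (Or.inr hs)
            · exact Or.inr (Or.inl (Or.inl rfl))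
        have hS' : (σs (m + 1)).S = SV.tv (Val.record flds, MTag.res t0) :: S := by
          rw [hσ']
        have hCI : {t : RTag | (∃ s, P (pcs m) = Op.Pack s) ∧
            ∃ v S', (σs (m + 1)).S = SV.tv (v, MTag.res t) :: S'} = {t0} := by
          ext t
          simp only [Set.mem_setOf_eq, Set.mem_singleton_iff]
          constructor
          · rintro ⟨-, v, S', hS⟩
            rw [hS'] at hS
            simp only [List.cons.injEq] at hS
            have h9 := SVtv_inj hS.1
            rw [Prod.ext_iff] at h9
            injection h9.2 with h9'
            exact h9'.symm
          · rintro rfl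
            exact ⟨⟨s, h⟩, Val.record flds, S, hS'⟩
        have hCE : {t : RTag | (∃ s, P (pcs m) = Op.Unpack s) ∧
            ∃ v S', (σs m).S = SV.tv (v, MTag.res t) :: S'} = ∅ := by
          ext t
          simp only [Set.mem_setOf_eq, Set.mem_empty_iff_false, iff_false]
          rintro ⟨⟨s', hP⟩, -⟩
          rw [h] at hP
          cases hP
        have ht0RE : t0 ∉ {t : RTag | ∃ i, i < m ∧ (∃ s, P (pcs i) = Op.Unpack s) ∧
            ∃ v S', (σs i).S = SV.tv (v, MTag.res t) :: S'} := by
          rintro ⟨i, him, -, v', S'', hS⟩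
          have hres : t0 ∈ resources (σs i) :=
            mem_resources.mpr (Or.inr ⟨(v', MTag.res t0),
              by rw [hS]; exact List.mem_cons_self, [], v', subTV_nil _⟩)
          exact hfresh m hm s (Val.record flds) t0 S h hS' i him.le hres
        rw [setOf_lt_succ, setOf_lt_succ, hCI, hCE, ← hσ', hR]
        exact alg_pack IH ht0RE
      | @pack_u M G L S s flds h1 h2 h3 h4 h5 =>
        have hw := hwf m hm.le
        rw [hσ] at hw
        have hfld : ∀ ft ∈ flds, ∀ t, ¬ tagIn ft.2 t := by
          rintro ⟨f, v, tg⟩ hft t'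
          have hmem : SV.tv ((v, tg) : TVal Prim Fld RTag) ∈
              ((flds.map fun ft => SV.tv ft.2) ++ S) :=
            List.mem_append.mpr (Or.inl (List.mem_map.mpr ⟨(f, (v, tg)), hft, rfl⟩))
          have hwft := hw.gc.wf_stack _ hmem
          have htg : tg = MTag.U := h5 f v tg hft
          exact WFTV_notag hwft htg t'
        have hhead : ∀ t, ¬ tagIn (Val.record flds, MTag.U) t := by
          intro t' ht
          rcases tagIn_record.mp ht with heq | ⟨f, tvf, hlk, htag⟩
          · cases heq
          · exact hfld (f, tvf) (lookupF_mem hlk) t' htag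
        have hR : resources (σs (m + 1)) = resources (σs m) := by
          rw [hσ, hσ']
          ext t
          simp only [mem_resources, stkT_cons_tv, stkT_append_map]
          constructor
          · rintro (hmm | ht | hs)
            exacts [Or.inl hmm, absurd ht (hhead t), Or.inr (Or.inr hs)]
          · rintro (hmm | ⟨ft, hft, htag⟩ | hs)
            exacts [Or.inl hmm, absurd htag (hfld ft hft t), Or.inr (Or.inr hs)]
        have hCI : {t : RTag | (∃ s, P (pcs m) = Op.Pack s) ∧
            ∃ v S', (σs (m + 1)).S = SV.tv (v, MTag.res t) :: S'} = ∅ := by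
          ext t
          simp only [Set.mem_setOf_eq, Set.mem_empty_iff_false, iff_false]
          rintro ⟨-, v, S', hS⟩
          rw [hσ'] at hS
          simp only [List.cons.injEq] at hS
          have h9 := SVtv_inj hS.1.symm
          rw [Prod.ext_iff] at h9
          cases h9.2
        have hCE : {t : RTag | (∃ s, P (pcs m) = Op.Unpack s) ∧
            ∃ v S', (σs m).S = SV.tv (v, MTag.res t) :: S'} = ∅ := by
          ext t
          simp only [Set.mem_setOf_eq, Set.mem_empty_iff_false, iff_false]
          rintro ⟨⟨s', hP⟩, -⟩
          rw [h] at hP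
          cases hP
        rw [setOf_lt_succ, setOf_lt_succ, hCI, hCE, ← hσ', hR]
        exact alg_neutral IH
      | @unpack M G L S s flds tg =>
        have hw := hwf m hm.le
        rw [hσ] at hw
        have hwfhead : WFTV typeOf ResTy (Val.record flds, tg) :=
          hw.gc.wf_stack _ (List.mem_cons_self)
        have hnodup : (flds.map Prod.fst).Nodup := by
          cases hwfhead with
          | record _ _ hne hnd hwff hiff hnores => exact hnd
        have hCI : {t : RTag | (∃ s, P (pcs m) = Op.Pack s) ∧
            ∃ v S', (σs (m + 1)).S = SV.tv (v, MTag.res t) :: S'} = ∅ := by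
          ext t
          simp only [Set.mem_setOf_eq, Set.mem_empty_iff_false, iff_false]
          rintro ⟨⟨s', hP⟩, -⟩
          rw [h] at hP
          cases hP
        cases tg with
        | U =>
          have hhead := WFTV_notag hwfhead rfl
          have hfld : ∀ ft ∈ flds, ∀ t, ¬ tagIn ft.2 t := by
            rintro ⟨f, tvf⟩ hft t' htag
            exact hhead t' (tagIn_record.mpr (Or.inr ⟨f, tvf, mem_lookupF hnodup hft, htag⟩))
          have hR : resources (σs (m + 1)) = resources (σs m) := by
            rw [hσ, hσ']
            ext t
            simp only [mem_resources, stkT_cons_tv, stkT_append_map]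
            constructor
            · rintro (hmm | ⟨ft, hft, htag⟩ | hs)
              exacts [Or.inl hmm, absurd htag (hfld ft hft t), Or.inr (Or.inr hs)]
            · rintro (hmm | ht | hs)
              exacts [Or.inl hmm, absurd ht (hhead t), Or.inr (Or.inr hs)]
          have hCE : {t : RTag | (∃ s, P (pcs m) = Op.Unpack s) ∧
              ∃ v S', (σs m).S = SV.tv (v, MTag.res t) :: S'} = ∅ := by
            ext t
            simp only [Set.mem_setOf_eq, Set.mem_empty_iff_false, iff_false]
            rintro ⟨-, v, S', hS⟩
            rw [hσ] at hS
            simp only [List.cons.injEq] at hS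
            have h9 := SVtv_inj hS.1
            rw [Prod.ext_iff] at h9
            cases h9.2
          rw [setOf_lt_succ, setOf_lt_succ, hCI, hCE, ← hσ', hR]
          exact alg_neutral IH
        | res t0 =>
          have tc := hw.tc
          have hR : resources (σs (m + 1)) = resources (σs m) \ {t0} := by
            rw [hσ, hσ']
            ext t
            simp only [mem_resources, stkT_cons_tv, stkT_append_map,
              Set.mem_diff, Set.mem_singleton_iff]
            constructor
            · rintro (hmm | ⟨⟨f, tvf⟩, hft, htag⟩ | hs)
              · refine ⟨Or.inl hmm, fun ht => ?_⟩
                obtain ⟨c, tv, hc, pp, v, hp⟩ := hmm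
                rw [ht] at hp
                exact tc.mem_stack c tv 0 (Val.record flds, MTag.res t0) pp []
                  v (Val.record flds) t0 hc (by simp) hp (subTV_nil _)
              · have hlk := mem_lookupF hnodup hft
                refine ⟨Or.inr (Or.inl (tagIn_record.mpr (Or.inr ⟨f, tvf, hlk, htag⟩))),
                  fun ht => ?_⟩
                obtain ⟨pp, v, hp⟩ := htag
                rw [ht] at hp
                have hsub : subTV (Val.record flds, MTag.res t0) (f :: pp) =
                    some (v, MTag.res t0) := by
                  simp only [subTV]
                  rw [hlk]
                  exact hp
                have h9 := (tc.stack_stack 0 0 (Val.record flds, MTag.res t0)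
                  (Val.record flds, MTag.res t0) (f :: pp) [] v (Val.record flds) t0
                  (by simp) (by simp) hsub (subTV_nil _)).2
                cases h9
              · refine ⟨Or.inr (Or.inr hs), fun ht => ?_⟩
                obtain ⟨tv, htv, pp, v, hp⟩ := hs
                rw [ht] at hp
                obtain ⟨j, hj⟩ := List.mem_iff_getElem?.mp htv
                have h9 := (tc.stack_stack 0 (j + 1) (Val.record flds, MTag.res t0)
                  tv [] pp (Val.record flds) v t0 (by simp)
                  (by rw [List.getElem?_cons_succ]; exact hj) (subTV_nil _) hp).1
                exact Nat.noConfusion h9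
            · rintro ⟨hmm | ht | hs, hne⟩
              · exact Or.inl hmm
              · rcases tagIn_record.mp ht with heq | ⟨f, tvf, hlk, htag⟩
                · injection heq with heq'
                  exact absurd heq'.symm hne
                · exact Or.inr (Or.inl ⟨(f, tvf), lookupF_mem hlk, htag⟩)
              · exact Or.inr (Or.inr hs)
          have hCE : {t : RTag | (∃ s, P (pcs m) = Op.Unpack s) ∧
              ∃ v S', (σs m).S = SV.tv (v, MTag.res t) :: S'} = {t0} := by
            ext t
            simp only [Set.mem_setOf_eq, Set.mem_singleton_iff]
            constructor
            · rintro ⟨-, v, S', hS⟩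
              rw [hσ] at hS
              simp only [List.cons.injEq] at hS
              have h9 := SVtv_inj hS.1
              rw [Prod.ext_iff] at h9
              injection h9.2 with h9'
              exact h9'.symm
            · rintro rfl
              exact ⟨⟨s, h⟩, Val.record flds, S, by rw [hσ]⟩
          rw [setOf_lt_succ, setOf_lt_succ, hCI, hCE, ← hσ', hR]
          exact alg_unpack IH
      | @loadconst M G L S a =>
        have hR : resources (σs (m + 1)) = resources (σs m) := by
          rw [hσ, hσ']
          ext t
          simp [mem_resources, stkT_cons_tv, tagIn_prim]
        have hCI : {t : RTag | (∃ s, P (pcs m) = Op.Pack s) ∧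
            ∃ v S', (σs (m + 1)).S = SV.tv (v, MTag.res t) :: S'} = ∅ := by
          ext t
          simp only [Set.mem_setOf_eq, Set.mem_empty_iff_false, iff_false]
          rintro ⟨⟨s, hP⟩, -⟩
          rw [h] at hP
          cases hP
        have hCE : {t : RTag | (∃ s, P (pcs m) = Op.Unpack s) ∧
            ∃ v S', (σs m).S = SV.tv (v, MTag.res t) :: S'} = ∅ := by
          ext t
          simp only [Set.mem_setOf_eq, Set.mem_empty_iff_false, iff_false]
          rintro ⟨⟨s, hP⟩, -⟩
          rw [h] at hP
          cases hP
        rw [setOf_lt_succ, setOf_lt_succ, hCI, hCE, ← hσ', hR]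
        exact alg_neutral IH
      | @stackop M G L S n' op' legal vs h1 h2 =>
        have hR : resources (σs (m + 1)) = resources (σs m) := by
          rw [hσ, hσ']
          ext t
          simp [mem_resources, stkT_cons_tv, stkT_append_prim, tagIn_prim]
        have hCI : {t : RTag | (∃ s, P (pcs m) = Op.Pack s) ∧
            ∃ v S', (σs (m + 1)).S = SV.tv (v, MTag.res t) :: S'} = ∅ := by
          ext t
          simp only [Set.mem_setOf_eq, Set.mem_empty_iff_false, iff_false]
          rintro ⟨⟨s, hP⟩, -⟩
          rw [h] at hP
          cases hP
        have hCE : {t : RTag | (∃ s, P (pcs m) = Op.Unpack s) ∧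
            ∃ v S', (σs m).S = SV.tv (v, MTag.res t) :: S'} = ∅ := by
          ext t
          simp only [Set.mem_setOf_eq, Set.mem_empty_iff_false, iff_false]
          rintro ⟨⟨s, hP⟩, -⟩
          rw [h] at hP
          cases hP
        rw [setOf_lt_succ, setOf_lt_succ, hCI, hCE, ← hσ', hR]
        exact alg_neutral IH
      | @moveto M G L S a v tg s c h1 h2 h3 h4 h5 =>
        have hR : resources (σs (m + 1)) = resources (σs m) := by
          rw [hσ, hσ']
          ext t
          simp only [mem_resources, stkT_cons_tv]
          rw [memT_add_iff h5 t, or_assoc]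
          simp [tagIn_prim]
        have hCI : {t : RTag | (∃ s, P (pcs m) = Op.Pack s) ∧
            ∃ v S', (σs (m + 1)).S = SV.tv (v, MTag.res t) :: S'} = ∅ := by
          ext t
          simp only [Set.mem_setOf_eq, Set.mem_empty_iff_false, iff_false]
          rintro ⟨⟨s, hP⟩, -⟩
          rw [h] at hP
          cases hP
        have hCE : {t : RTag | (∃ s, P (pcs m) = Op.Unpack s) ∧
            ∃ v S', (σs m).S = SV.tv (v, MTag.res t) :: S'} = ∅ := by
          ext t
          simp only [Set.mem_setOf_eq, Set.mem_empty_iff_false, iff_false]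
          rintro ⟨⟨s, hP⟩, -⟩
          rw [h] at hP
          cases hP
        rw [setOf_lt_succ, setOf_lt_succ, hCI, hCE, ← hσ', hR]
        exact alg_neutral IH
      | @movefrom M G L S a s c tv' h1 h2 h3 h4 =>
        have hR : resources (σs (m + 1)) = resources (σs m) := by
          rw [hσ, hσ']
          ext t
          simp only [mem_resources, stkT_cons_tv]
          rw [← or_assoc, memT_delete_iff h4 t]
          simp [tagIn_prim]
        have hCI : {t : RTag | (∃ s, P (pcs m) = Op.Pack s) ∧
            ∃ v S', (σs (m + 1)).S = SV.tv (v, MTag.res t) :: S'} = ∅ := by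
          ext t
          simp only [Set.mem_setOf_eq, Set.mem_empty_iff_false, iff_false]
          rintro ⟨⟨s, hP⟩, -⟩
          rw [h] at hP
          cases hP
        have hCE : {t : RTag | (∃ s, P (pcs m) = Op.Unpack s) ∧
            ∃ v S', (σs m).S = SV.tv (v, MTag.res t) :: S'} = ∅ := by
          ext t
          simp only [Set.mem_setOf_eq, Set.mem_empty_iff_false, iff_false]
          rintro ⟨⟨s, hP⟩, -⟩
          rw [h] at hP
          cases hP
        rw [setOf_lt_succ, setOf_lt_succ, hCI, hCE, ← hσ', hR]
        exact alg_neutral IH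
      | @borrowglobal M G L S a s c h1 h2 h3 =>
        have hR : resources (σs (m + 1)) = resources (σs m) := by
          rw [hσ, hσ']
          ext t
          simp [mem_resources, stkT_cons_tv, stkT_cons_ref, tagIn_prim]
        have hCI : {t : RTag | (∃ s, P (pcs m) = Op.Pack s) ∧
            ∃ v S', (σs (m + 1)).S = SV.tv (v, MTag.res t) :: S'} = ∅ := by
          ext t
          simp only [Set.mem_setOf_eq, Set.mem_empty_iff_false, iff_false]
          rintro ⟨⟨s, hP⟩, -⟩
          rw [h] at hP
          cases hP
        have hCE : {t : RTag | (∃ s, P (pcs m) = Op.Unpack s) ∧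
            ∃ v S', (σs m).S = SV.tv (v, MTag.res t) :: S'} = ∅ := by
          ext t
          simp only [Set.mem_setOf_eq, Set.mem_empty_iff_false, iff_false]
          rintro ⟨⟨s, hP⟩, -⟩
          rw [h] at hP
          cases hP
        rw [setOf_lt_succ, setOf_lt_succ, hCI, hCE, ← hσ', hR]
        exact alg_neutral IH
      | @existsg M G L S a s b h1 h2 =>
        have hR : resources (σs (m + 1)) = resources (σs m) := by
          rw [hσ, hσ']
          ext t
          simp [mem_resources, stkT_cons_tv, tagIn_prim]
        have hCI : {t : RTag | (∃ s, P (pcs m) = Op.Pack s) ∧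
            ∃ v S', (σs (m + 1)).S = SV.tv (v, MTag.res t) :: S'} = ∅ := by
          ext t
          simp only [Set.mem_setOf_eq, Set.mem_empty_iff_false, iff_false]
          rintro ⟨⟨s, hP⟩, -⟩
          rw [h] at hP
          cases hP
        have hCE : {t : RTag | (∃ s, P (pcs m) = Op.Unpack s) ∧
            ∃ v S', (σs m).S = SV.tv (v, MTag.res t) :: S'} = ∅ := by
          ext t
          simp only [Set.mem_setOf_eq, Set.mem_empty_iff_false, iff_false]
          rintro ⟨⟨s, hP⟩, -⟩
          rw [h] at hP
          cases hP
        rw [setOf_lt_succ, setOf_lt_succ, hCI, hCE, ← hσ', hR]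
        exact alg_neutral IH

end MoveSem
end

section
/- The borrow and freeze rules preserve well-formedness: let σ = ⟨M,G,L,S⟩ be a well-formed state. (i) BorrowLoc: if L(x) = c ∈ 𝓛, then ⟨M, G, L, ⟨c,[],mut⟩::S⟩ is well-formed. (ii) BorrowField: if S = ⟨c,p,q⟩::S' with c ∈ dom(M) and M(c)[p] a tagged record value having field f, then ⟨M, G, L, ⟨c,p::f,q⟩::S'⟩ is well-formed. (iii) FreezeRef: if S = ⟨c,p,q⟩::S', then ⟨M, G, L, ⟨c,p,immut⟩::S'⟩ is well-formed. -/
namespace MoveSem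

variable {Loc Prim Var Fld RTag Ty : Type}

theorem wf_cons_inr {Loc Prim Var Fld RTag Ty : Type} [DecidableEq Fld]
    {typeOf : Val Prim Fld RTag → Ty} {ResTy : Set Ty}
    {M : Loc → Option (TVal Prim Fld RTag)} {G : Prim × Ty → Option Loc}
    {L : Var → Option (Loc ⊕ MRef Loc Fld)} {S : List (SVal Loc Prim Fld RTag)}
    (hwf : WFState typeOf ResTy (MState.mk M G L S)) (r : MRef Loc Fld ⊕ Loc) :
    WFState typeOf ResTy (MState.mk M G L (Sum.inr r :: S)) := by
  obtain ⟨gc, tc, na⟩ := hwf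
  refine ⟨⟨gc.wf_mem, ?_, gc.dom_eq, gc.glob_ty⟩, ⟨tc.mem_mem, ?_, ?_⟩,
    ⟨na.locals, na.globals, na.glob_loc⟩⟩
  · intro tv htv
    rcases List.mem_cons.mp htv with h | h
    · exact absurd h (by simp [SV.tv])
    · exact gc.wf_stack tv h
  · rintro (_ | i₁) (_ | i₂) tv₁ tv₂ p₁ p₂ v₁ v₂ t h₁ h₂ hs₁ hs₂
    · simp [SV.tv] at h₁
    · simp [SV.tv] at h₁
    · simp [SV.tv] at h₂
    · simp only [List.getElem?_cons_succ] at h₁ h₂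
      obtain ⟨hi, hp⟩ := tc.stack_stack i₁ i₂ tv₁ tv₂ p₁ p₂ v₁ v₂ t h₁ h₂ hs₁ hs₂
      exact ⟨by omega, hp⟩
  · rintro c tv (_ | i) tv' p₁ p₂ v₁ v₂ t hM h hs₁ hs₂
    · simp [SV.tv] at h
    · simp only [List.getElem?_cons_succ] at h
      exact tc.mem_stack c tv i tv' p₁ p₂ v₁ v₂ t hM h hs₁ hs₂

theorem wf_tail {Loc Prim Var Fld RTag Ty : Type} [DecidableEq Fld]
    {typeOf : Val Prim Fld RTag → Ty} {ResTy : Set Ty}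
    {M : Loc → Option (TVal Prim Fld RTag)} {G : Prim × Ty → Option Loc}
    {L : Var → Option (Loc ⊕ MRef Loc Fld)} {S : List (SVal Loc Prim Fld RTag)}
    {r : SVal Loc Prim Fld RTag}
    (hwf : WFState typeOf ResTy (MState.mk M G L (r :: S))) :
    WFState typeOf ResTy (MState.mk M G L S) := by
  obtain ⟨gc, tc, na⟩ := hwf
  refine ⟨⟨gc.wf_mem, ?_, gc.dom_eq, gc.glob_ty⟩, ⟨tc.mem_mem, ?_, ?_⟩,
    ⟨na.locals, na.globals, na.glob_loc⟩⟩
  · intro tv htv; exact gc.wf_stack tv (List.mem_cons_of_mem _ htv)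
  · intro i₁ i₂ tv₁ tv₂ p₁ p₂ v₁ v₂ t h₁ h₂ hs₁ hs₂
    have := tc.stack_stack (i₁ + 1) (i₂ + 1) tv₁ tv₂ p₁ p₂ v₁ v₂ t
      (by simpa using h₁) (by simpa using h₂) hs₁ hs₂
    exact ⟨by omega, this.2⟩
  · intro c tv i tv' p₁ p₂ v₁ v₂ t hM h hs₁ hs₂
    exact tc.mem_stack c tv (i + 1) tv' p₁ p₂ v₁ v₂ t hM (by simpa using h) hs₁ hs₂

/-- The `BorrowLoc`, `BorrowField` and `FreezeRef` rules preserve well-formedness. -/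
theorem borrow_freeze_preserve_wf {Loc Prim Var Fld RTag Ty : Type}
    [DecidableEq Loc] [DecidableEq Prim] [DecidableEq Var] [DecidableEq Fld] [DecidableEq Ty]
    [Countable Loc] [Countable Prim] [Countable Var] [Countable RTag] [Finite Fld]
    (typeOf : Val Prim Fld RTag → Ty) (ResTy : Set Ty)
    (M : Loc → Option (TVal Prim Fld RTag)) (G : Prim × Ty → Option Loc)
    (L : Var → Option (Loc ⊕ MRef Loc Fld)) (S : List (SVal Loc Prim Fld RTag))
    (hwf : WFState typeOf ResTy (MState.mk M G L S)) :
    -- (i) BorrowLoc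
    (∀ (x : Var) (c : Loc), L x = some (Sum.inl c) →
      WFState typeOf ResTy (MState.mk M G L (SV.ref ⟨c, [], true⟩ :: S))) ∧
    -- (ii) BorrowField
    (∀ (c : Loc) (p : List Fld) (q : Bool) (S' : List (SVal Loc Prim Fld RTag))
      (tv : TVal Prim Fld RTag) (flds : List (Fld × TVal Prim Fld RTag)) (t : MTag RTag)
      (f : Fld) (tvf : TVal Prim Fld RTag),
      S = SV.ref ⟨c, p, q⟩ :: S' → M c = some tv →
      subTV tv p = some (Val.record flds, t) → lookupF flds f = some tvf →
      WFState typeOf ResTy (MState.mk M G L (SV.ref ⟨c, p ++ [f], q⟩ :: S'))) ∧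
    -- (iii) FreezeRef
    (∀ (c : Loc) (p : List Fld) (q : Bool) (S' : List (SVal Loc Prim Fld RTag)),
      S = SV.ref ⟨c, p, q⟩ :: S' →
      WFState typeOf ResTy (MState.mk M G L (SV.ref ⟨c, p, false⟩ :: S'))) := by
  refine ⟨fun x c _ => wf_cons_inr hwf _, ?_, ?_⟩
  · intro c p q S' tv flds t f tvf hS _ _ _
    subst hS
    exact wf_cons_inr (wf_tail hwf) _
  · intro c p q S' hS
    subst hS
    exact wf_cons_inr (wf_tail hwf) _

end MoveSem
end

section
/- The Pop rules preserve well-formedness: let σ = ⟨M,G,L,r::S⟩ be a well-formed state where the top stack entry r is either a non-resource tagged value ⟨v,U⟩ or a reference ⟨c,p,q⟩. Then the state ⟨M,G,L,S⟩ is well-formed. -/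
namespace MoveSem

variable {Loc Prim Var Fld RTag Ty : Type}

/-- The `Pop` rules preserve well-formedness. -/
theorem pop_preserves_wf {Loc Prim Var Fld RTag Ty : Type}
    [DecidableEq Loc] [DecidableEq Prim] [DecidableEq Var] [DecidableEq Fld] [DecidableEq Ty]
    [Countable Loc] [Countable Prim] [Countable Var] [Countable RTag] [Finite Fld]
    (typeOf : Val Prim Fld RTag → Ty) (ResTy : Set Ty)
    (M : Loc → Option (TVal Prim Fld RTag)) (G : Prim × Ty → Option Loc)
    (L : Var → Option (Loc ⊕ MRef Loc Fld)) (S : List (SVal Loc Prim Fld RTag))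
    (r : SVal Loc Prim Fld RTag)
    (hwf : WFState typeOf ResTy (MState.mk M G L (r :: S)))
    (hr : (∃ v, r = SV.tv (v, MTag.U)) ∨ (∃ rr : MRef Loc Fld, r = SV.ref rr)) :
    WFState typeOf ResTy (MState.mk M G L S) := by
  obtain ⟨gc, tc, na⟩ := hwf
  refine ⟨⟨fun c tv h => gc.wf_mem c tv h, ?_, gc.dom_eq, gc.glob_ty⟩, ⟨tc.mem_mem, ?_, ?_⟩, ⟨na.locals, na.globals, na.glob_loc⟩⟩
  · intro tv h
    exact gc.wf_stack tv (List.mem_cons_of_mem r h)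
  · intro i₁ i₂ tv₁ tv₂ p₁ p₂ v₁ v₂ t h1 h2 hs1 hs2
    have := tc.stack_stack (i₁+1) (i₂+1) tv₁ tv₂ p₁ p₂ v₁ v₂ t
      (by simpa using h1) (by simpa using h2) hs1 hs2
    exact ⟨by omega, this.2⟩
  · intro c tv i tv' p₁ p₂ v₁ v₂ t hm hs hsub1 hsub2
    exact tc.mem_stack c tv (i+1) tv' p₁ p₂ v₁ v₂ t hm (by simpa using hs) hsub1 hsub2

end MoveSem
end

section
/- The Unpack rule preserves well-formedness: let σ = ⟨M,G,L, ⟨v,t⟩::S⟩ be a well-formed state where v = {(fᵢ,tvᵢ) | 1 ≤ i ≤ n} is a record value. Then the state ⟨M, G, L, tv₁::⋯::tvₙ::S⟩ obtained by replacing the top stack entry with the field values of v is well-formed. -/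
namespace MoveSem

variable {Loc Prim Var Fld RTag Ty : Type}

lemma lookupF_of_mem [DecidableEq Fld] {α : Type} {flds : List (Fld × α)} {f : Fld} {a : α}
    (hnodup : (flds.map Prod.fst).Nodup) (hmem : (f, a) ∈ flds) :
    lookupF flds f = some a := by
  induction flds with
  | nil => cases hmem
  | cons hd tl ih =>
    simp only [List.map_cons, List.nodup_cons] at hnodup
    rcases List.mem_cons.mp hmem with h | h
    · cases h
      simp [lookupF]
    · have hne : hd.1 ≠ f := by
        intro he
        exact hnodup.1 (he ▸ List.mem_map.mpr ⟨(f, a), h, rfl⟩)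
      obtain ⟨g, b⟩ := hd
      simp only [lookupF, if_neg hne]
      exact ih hnodup.2 h

lemma subTV_record_cons [DecidableEq Fld] {flds : List (Fld × TVal Prim Fld RTag)}
    {t : MTag RTag} {f : Fld} {tv : TVal Prim Fld RTag} (h : lookupF flds f = some tv)
    (p : List Fld) :
    subTV ((Val.record flds : Val Prim Fld RTag), t) (f :: p) = subTV tv p := by
  simp [subTV, h]

/-- The `Unpack` rule preserves well-formedness. -/
theorem unpack_preserves_wf {Loc Prim Var Fld RTag Ty : Type}
    [DecidableEq Loc] [DecidableEq Prim] [DecidableEq Var] [DecidableEq Fld] [DecidableEq Ty]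
    [Countable Loc] [Countable Prim] [Countable Var] [Countable RTag] [Finite Fld]
    (typeOf : Val Prim Fld RTag → Ty) (ResTy : Set Ty)
    (M : Loc → Option (TVal Prim Fld RTag)) (G : Prim × Ty → Option Loc)
    (L : Var → Option (Loc ⊕ MRef Loc Fld)) (S : List (SVal Loc Prim Fld RTag))
    (flds : List (Fld × TVal Prim Fld RTag)) (t : MTag RTag)
    (hwf : WFState typeOf ResTy (MState.mk M G L (SV.tv (Val.record flds, t) :: S))) :
    WFState typeOf ResTy (MState.mk M G L ((flds.map fun ft => SV.tv ft.2) ++ S)) := by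
  obtain ⟨gc, tc, na⟩ := hwf
  have hrec : WFTV typeOf ResTy (Val.record flds, t) :=
    gc.wf_stack _ List.mem_cons_self
  have hnodup : (flds.map Prod.fst).Nodup := by cases hrec; assumption
  have hfldwf : ∀ f tv, (f, tv) ∈ flds → WFTV typeOf ResTy tv := by cases hrec; assumption
  set n := flds.length with hn
  set oldS : List (SVal Loc Prim Fld RTag) := SV.tv (Val.record flds, t) :: S with holdS
  set newS : List (SVal Loc Prim Fld RTag) := (flds.map fun ft => SV.tv ft.2) ++ S with hnewS
  have hold0 : oldS[0]? = some (SV.tv (Val.record flds, t)) := by simp [holdS]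
  have holdsucc : ∀ j : ℕ, oldS[j + 1]? = S[j]? := by intro j; simp [holdS]
  -- characterization of the new stack entries
  have hget : ∀ (i : ℕ) (sv : SVal Loc Prim Fld RTag), newS[i]? = some sv →
      (∃ h : i < n, sv = SV.tv (flds[i]).2) ∨ (n ≤ i ∧ S[i - n]? = some sv) := by
    intro i sv h
    by_cases hi : i < n
    · left
      refine ⟨hi, ?_⟩
      have : newS[i]? = (flds.map fun ft => SV.tv (Loc := Loc) ft.2)[i]? := by
        simp [hnewS, List.getElem?_append, hi]
        intro h'; exact absurd h' (by omega)
      rw [this] at h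
      have hi' : i < (flds.map fun ft => SV.tv (Loc := Loc) ft.2).length := by
        simpa using hi
      rw [List.getElem?_eq_getElem hi'] at h
      simp only [List.getElem_map] at h
      exact (Option.some_injective _ h).symm
    · right
      refine ⟨le_of_not_gt hi, ?_⟩
      have : newS[i]? = S[i - n]? := by
        rw [hnewS, List.getElem?_append_right (by simpa using le_of_not_gt hi)]
        simp [hn]
      rw [this] at h
      exact h
  -- translation of tag occurrences on the new stack to the old stack
  have htrans : ∀ (i : ℕ) (tv : TVal Prim Fld RTag) (p : List Fld) (v : Val Prim Fld RTag)
      (t' : RTag), newS[i]? = some (SV.tv tv) → subTV tv p = some (v, MTag.res t') →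
      (∃ h : i < n, subTV ((Val.record flds : Val Prim Fld RTag), t) (flds[i].1 :: p)
          = some (v, MTag.res t')) ∨
      (n ≤ i ∧ S[i - n]? = some (SV.tv tv)) := by
    intro i tv p v t' hi hsub
    rcases hget i _ hi with ⟨hlt, heq⟩ | ⟨hle, hS⟩
    · left
      refine ⟨hlt, ?_⟩
      have htv : tv = (flds[i]).2 := by
        have := heq
        simp only [SV.tv, Sum.inl.injEq] at this
        exact this
      have hmem : (flds[i].1, flds[i].2) ∈ flds := by
        simp
      rw [subTV_record_cons (lookupF_of_mem hnodup hmem), ← htv]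
      exact hsub
    · right; exact ⟨hle, hS⟩
  -- index injectivity of field names
  have hinj : ∀ (i₁ i₂ : ℕ) (h₁ : i₁ < n) (h₂ : i₂ < n),
      flds[i₁].1 = flds[i₂].1 → i₁ = i₂ := by
    intro i₁ i₂ h₁ h₂ he
    have h₁' : i₁ < (flds.map Prod.fst).length := by simpa using h₁
    have h₂' : i₂ < (flds.map Prod.fst).length := by simpa using h₂
    refine (List.Nodup.getElem_inj_iff hnodup (hi := h₁') (hj := h₂')).mp ?_
    simpa using he
  refine ⟨⟨gc.wf_mem, ?_, gc.dom_eq, gc.glob_ty⟩, ⟨tc.mem_mem, ?_, ?_⟩,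
    ⟨na.locals, na.globals, na.glob_loc⟩⟩
  · -- wf_stack
    intro tv htv
    rcases List.mem_append.mp htv with h | h
    · obtain ⟨ft, hft, he⟩ := List.mem_map.mp h
      have : tv = ft.2 := by
        simp only [SV.tv, Sum.inl.injEq] at he
        exact he.symm
      exact this ▸ hfldwf ft.1 ft.2 (by simpa using hft)
    · exact gc.wf_stack tv (List.mem_cons_of_mem _ h)
  · -- stack_stack
    intro i₁ i₂ tv₁ tv₂ p₁ p₂ v₁ v₂ t' h₁ h₂ hs₁ hs₂
    rcases htrans i₁ tv₁ p₁ v₁ t' h₁ hs₁ with ⟨hl₁, ho₁⟩ | ⟨hg₁, ho₁⟩ <;>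
      rcases htrans i₂ tv₂ p₂ v₂ t' h₂ hs₂ with ⟨hl₂, ho₂⟩ | ⟨hg₂, ho₂⟩
    · have := tc.stack_stack 0 0 _ _ _ _ _ _ t' hold0 hold0 ho₁ ho₂
      have hpe : flds[i₁].1 :: p₁ = flds[i₂].1 :: p₂ := this.2
      have hfe : flds[i₁].1 = flds[i₂].1 := by injection hpe
      have hpp : p₁ = p₂ := by injection hpe
      exact ⟨hinj i₁ i₂ hl₁ hl₂ hfe, hpp⟩
    · have := tc.stack_stack 0 (i₂ - n + 1) _ _ _ _ _ _ t' hold0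
        ((holdsucc _).trans ho₂ : oldS[i₂ - n + 1]? = _) ho₁ hs₂
      omega
    · have := tc.stack_stack (i₁ - n + 1) 0 _ _ _ _ _ _ t'
        ((holdsucc _).trans ho₁ : oldS[i₁ - n + 1]? = _) hold0 hs₁ ho₂
      omega
    · have := tc.stack_stack (i₁ - n + 1) (i₂ - n + 1) _ _ _ _ _ _ t'
        ((holdsucc _).trans ho₁ : oldS[i₁ - n + 1]? = _)
        ((holdsucc _).trans ho₂ : oldS[i₂ - n + 1]? = _) hs₁ hs₂
      exact ⟨by omega, this.2⟩
  · -- mem_stack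
    intro c tv i tv' p₁ p₂ v₁ v₂ t' hc hi hs₁ hs₂
    rcases htrans i tv' p₂ v₂ t' hi hs₂ with ⟨hl, ho⟩ | ⟨hg, ho⟩
    · exact tc.mem_stack c tv 0 _ p₁ _ v₁ v₂ t' hc hold0 hs₁ ho
    · exact tc.mem_stack c tv (i - n + 1) tv' p₁ p₂ v₁ v₂ t' hc
        ((holdsucc _).trans ho : oldS[i - n + 1]? = _) hs₁ hs₂

end MoveSem
end

section
/- The MoveTo rule preserves well-formedness: let σ = ⟨M,G,L, tv₁::tv₂::S⟩ be a well-formed state where tv₁ = ⟨a,U⟩ with a ∈ 𝓐 an address, tv₂ = ⟨v,t⟩ with v of type s ∈ 𝓣 (so tv₂ is a resource), ⟨a,s⟩ ∉ dom(G), and c ∉ dom(M) is a fresh location. Then the state ⟨M[c ↦ tv₂], G[⟨a,s⟩ ↦ c], L, S⟩ is well-formed. -/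
namespace MoveSem

variable {Loc Prim Var Fld RTag Ty : Type}

/-- The `MoveTo` rule preserves well-formedness. -/
theorem moveto_preserves_wf {Loc Prim Var Fld RTag Ty : Type}
    [DecidableEq Loc] [DecidableEq Prim] [DecidableEq Var] [DecidableEq Fld] [DecidableEq Ty]
    [Countable Loc] [Countable Prim] [Countable Var] [Countable RTag] [Finite Fld]
    (typeOf : Val Prim Fld RTag → Ty) (ResTy : Set Ty) (Addr : Set Prim)
    (M : Loc → Option (TVal Prim Fld RTag)) (G : Prim × Ty → Option Loc)
    (L : Var → Option (Loc ⊕ MRef Loc Fld)) (S : List (SVal Loc Prim Fld RTag))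
    (a : Prim) (v : Val Prim Fld RTag) (t : MTag RTag) (s : Ty) (c : Loc)
    (hwf : WFState typeOf ResTy
      (MState.mk M G L (SV.tv (Val.prim a, MTag.U) :: SV.tv (v, t) :: S)))
    (ha : a ∈ Addr) (hty : typeOf v = s) (hs : s ∈ ResTy)
    (hG : G (a, s) = none) (hc : M c = none) :
    WFState typeOf ResTy
      (MState.mk (upd M c (some (v, t))) (upd G (a, s) (some c)) L S) := by
  obtain ⟨⟨wf_mem, wf_stack, dom_eq, glob_ty⟩, ⟨mem_mem, stack_stack, mem_stack⟩,
    ⟨locals, globals, glob_loc⟩⟩ := hwf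
  simp only at wf_mem wf_stack dom_eq glob_ty mem_mem stack_stack mem_stack locals globals glob_loc
  have hvt : WFTV typeOf ResTy (v, t) := wf_stack (v, t) (by simp [SV.tv])
  have hS1 : (SV.tv (Val.prim a, MTag.U) :: SV.tv (v, t) :: S)[1]? = some (SV.tv (v, t)) := by simp
  have hSshift : ∀ (i : ℕ) (x : SVal Loc Prim Fld RTag), S[i]? = some x →
      (SV.tv (Val.prim a, MTag.U) :: SV.tv (v, t) :: S)[i + 2]? = some x := by
    intro i x hx
    simpa using hx
  refine ⟨⟨?_, ?_, ?_, ?_⟩, ⟨?_, ?_, ?_⟩, ⟨?_, ?_, ?_⟩⟩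
  · -- wf_mem
    intro c' tv h
    simp only [upd] at h
    split at h
    · cases h; exact hvt
    · exact wf_mem _ _ h
  · -- wf_stack
    intro tv htv
    exact wf_stack tv (List.mem_cons_of_mem _ (List.mem_cons_of_mem _ htv))
  · -- dom_eq
    intro c'
    simp only [upd]
    by_cases hcc : c' = c
    · subst hcc
      constructor
      · intro _; left; exact ⟨(a, s), by simp⟩
      · intro _; exact ⟨(v, t), by simp⟩
    · simp only [if_neg hcc]
      constructor
      · intro hm
        rcases (dom_eq c').mp hm with ⟨g, hg⟩ | hx
        · left
          refine ⟨g, ?_⟩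
          have hgne : g ≠ (a, s) := by rintro rfl; rw [hG] at hg; cases hg
          simp [if_neg hgne, hg]
        · right; exact hx
      · intro hm
        rcases hm with ⟨g, hg⟩ | hx
        · by_cases hgg : g = (a, s)
          · subst hgg; simp at hg; exact absurd hg.symm hcc
          · rw [if_neg hgg] at hg
            exact (dom_eq c').mpr (Or.inl ⟨g, hg⟩)
        · exact (dom_eq c').mpr (Or.inr hx)
  · -- glob_ty
    intro a' s' c' h
    simp only [upd] at h ⊢
    split at h
    · rename_i heq
      injection heq with ha' hs'
      cases h
      subst ha' hs'
      exact ⟨v, t, by simp, hty⟩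
    · obtain ⟨v', t', hM, hty'⟩ := glob_ty a' s' c' h
      have hne : c' ≠ c := by rintro rfl; rw [hc] at hM; cases hM
      exact ⟨v', t', by simp [if_neg hne, hM], hty'⟩
  · -- mem_mem
    intro c₁ c₂ tv₁ tv₂ p₁ p₂ v₁ v₂ t' h₁ h₂ hs₁ hs₂
    simp only [upd] at h₁ h₂
    split at h₁ <;> split at h₂
    · rename_i e₁ e₂
      cases h₁; cases h₂
      obtain ⟨_, hp⟩ := stack_stack 1 1 (v, t) (v, t) p₁ p₂ v₁ v₂ t' hS1 hS1 hs₁ hs₂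
      exact ⟨e₁.trans e₂.symm, hp⟩
    · cases h₁
      exact absurd (mem_stack c₂ tv₂ 1 (v, t) p₂ p₁ v₂ v₁ t' h₂ hS1 hs₂ hs₁) (fun h => h)
    · cases h₂
      exact absurd (mem_stack c₁ tv₁ 1 (v, t) p₁ p₂ v₁ v₂ t' h₁ hS1 hs₁ hs₂) (fun h => h)
    · exact mem_mem c₁ c₂ tv₁ tv₂ p₁ p₂ v₁ v₂ t' h₁ h₂ hs₁ hs₂
  · -- stack_stack
    intro i₁ i₂ tv₁ tv₂ p₁ p₂ v₁ v₂ t' h₁ h₂ hs₁ hs₂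
    obtain ⟨hi, hp⟩ := stack_stack (i₁ + 2) (i₂ + 2) tv₁ tv₂ p₁ p₂ v₁ v₂ t'
      (hSshift _ _ h₁) (hSshift _ _ h₂) hs₁ hs₂
    exact ⟨by omega, hp⟩
  · -- mem_stack
    intro c' tv i tv' p₁ p₂ v₁ v₂ t' hM hSt hs₁ hs₂
    simp only [upd] at hM
    split at hM
    · cases hM
      obtain ⟨hi, _⟩ := stack_stack 1 (i + 2) (v, t) tv' p₁ p₂ v₁ v₂ t'
        hS1 (hSshift _ _ hSt) hs₁ hs₂
      omega
    · exact mem_stack c' tv (i + 2) tv' p₁ p₂ v₁ v₂ t' hM (hSshift _ _ hSt) hs₁ hs₂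
  · -- locals
    exact fun x₁ x₂ c' h h₁ h₂ => locals x₁ x₂ c' h h₁ h₂
  · -- globals
    intro g₁ g₂ c' hne h₁ h₂
    simp only [upd] at h₁ h₂
    split at h₁ <;> split at h₂
    · rename_i e₁ e₂; exact hne (e₁.trans e₂.symm)
    · cases h₁
      obtain ⟨tv, hM⟩ := (dom_eq c).mpr (Or.inl ⟨g₂, h₂⟩)
      rw [hc] at hM; cases hM
    · cases h₂
      obtain ⟨tv, hM⟩ := (dom_eq c).mpr (Or.inl ⟨g₁, h₁⟩)
      rw [hc] at hM; cases hM
    · exact globals g₁ g₂ c' hne h₁ h₂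
  · -- glob_loc
    intro g x c' hG' hL
    simp only [upd] at hG'
    split at hG'
    · cases hG'
      obtain ⟨tv, hM⟩ := (dom_eq c).mpr (Or.inr ⟨x, hL⟩)
      rw [hc] at hM; cases hM
    · exact glob_loc g x c' hG' hL

end MoveSem
end
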